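/- arXiv:1811.10387 — 8 statements merged into one kernel-verified Lean document; each statement's English description precedes it below -/
import Mathlib

section
/- Let p > 0, r₀ > 0 and let f : [r₀, ∞) → ℝ be increasing and right-continuous, with Lebesgue–Stieltjes measure df. If the integral ∫_{r₀}^{∞} |f(t)|/t^{p+1} dt is finite, then: (1) limsup_{r→∞} max(f(r),0)/r^p = 0 (in fact f(r)/r^p → 0); (2) the Stieltjes integral ∫_{(r₀,∞)} t^{−p} df(t) is finite; and (3) for every r ≥ r₀ one has the integration-by-parts identity ∫_{(r,∞)} t^{−p} df(t) = −f(r)/r^p + p·∫_{r}^{∞} f(t)/t^{p+1} dt. -/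
/-!
Writing `t ^ (-p) = ∫_t^∞ p / s ^ (p + 1) ds` and applying Tonelli on `{r < t ≤ s}` turns
`∫_{(r,∞)} t ^ (-p) df` into `∫_r^∞ p / s ^ (p + 1) * (f s - f r) ds`, which is finite by
hypothesis and splits into the stated identity. Both tail integrals in that identity tend to `0`
as `r → ∞`, hence so does `f r / r ^ p`.
-/

open MeasureTheory Filter Set
open scoped ENNReal

section PowerTail

variable {p c : ℝ}

lemma integrableOn_Ioi_div_rpow_add_one (hp : 0 < p) (hc : 0 < c) (a : ℝ) :
    IntegrableOn (fun s : ℝ => a / s ^ (p + 1)) (Ioi c) := by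
  refine IntegrableOn.congr_fun
    ((integrableOn_Ioi_rpow_of_lt (by linarith : -(p + 1) < -1) hc).const_mul a)
    (fun s hs => ?_) measurableSet_Ioi
  rw [Real.rpow_neg (hc.trans hs).le, div_eq_mul_inv]

lemma integral_Ioi_div_rpow_add_one (hp : 0 < p) (hc : 0 < c) :
    ∫ s in Ioi c, p / s ^ (p + 1) = c ^ (-p) := by
  have hpow : ∫ s in Ioi c, s ^ (-(p + 1)) = c ^ (-p) / p := by
    rw [integral_Ioi_rpow_of_lt (by linarith) hc, show -(p + 1) + 1 = -p by ring, neg_div_neg_eq]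
  calc ∫ s in Ioi c, p / s ^ (p + 1) = ∫ s in Ioi c, p * s ^ (-(p + 1)) :=
        setIntegral_congr_fun measurableSet_Ioi fun s hs => by
          rw [Real.rpow_neg (hc.trans hs).le, div_eq_mul_inv]
    _ = c ^ (-p) := by rw [integral_const_mul, hpow]; field_simp

lemma lintegral_Ici_ofReal_div_rpow_add_one (hp : 0 < p) (hc : 0 < c) :
    ∫⁻ s in Ici c, ENNReal.ofReal (p / s ^ (p + 1)) = ENNReal.ofReal (c ^ (-p)) := by
  rw [← restrict_Ioi_eq_restrict_Ici, ← integral_Ioi_div_rpow_add_one hp hc,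
    ofReal_integral_eq_lintegral_ofReal (integrableOn_Ioi_div_rpow_add_one hp hc p)]
  filter_upwards [ae_restrict_mem measurableSet_Ioi] with s hs
  have : 0 < s := hc.trans hs
  positivity

lemma integrableOn_Ioi_div_rpow_add_one_mul_sub {f : ℝ → ℝ} (hp : 0 < p) (hc : 0 < c)
    (hf : IntegrableOn (fun s => f s / s ^ (p + 1)) (Ioi c)) :
    IntegrableOn (fun s => p / s ^ (p + 1) * (f s - f c)) (Ioi c) := by
  refine IntegrableOn.congr_fun
    ((hf.const_mul p).sub (integrableOn_Ioi_div_rpow_add_one hp hc (p * f c)))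
    (fun s _ => ?_) measurableSet_Ioi
  simp only [Pi.sub_apply]
  ring

lemma integral_Ioi_div_rpow_add_one_mul_sub {f : ℝ → ℝ} (hp : 0 < p) (hc : 0 < c)
    (hf : IntegrableOn (fun s => f s / s ^ (p + 1)) (Ioi c)) :
    ∫ s in Ioi c, p / s ^ (p + 1) * (f s - f c)
      = -(f c / c ^ p) + p * ∫ s in Ioi c, f s / s ^ (p + 1) := by
  have hsplit : (fun s => p / s ^ (p + 1) * (f s - f c))
      = fun s => p * (f s / s ^ (p + 1)) - f c * (p / s ^ (p + 1)) := by
    ext s; ring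
  rw [hsplit, integral_sub (hf.const_mul p)
      ((integrableOn_Ioi_div_rpow_add_one hp hc p).const_mul (f c)),
    integral_const_mul, integral_const_mul, integral_Ioi_div_rpow_add_one hp hc,
    Real.rpow_neg hc.le, div_eq_mul_inv]
  ring

end PowerTail

namespace StieltjesFunction

theorem setLIntegral_Ioi_lintegral_Ici (f : StieltjesFunction ℝ) {ψ : ℝ → ℝ≥0∞}
    (hψ : Measurable ψ) (r : ℝ) :
    ∫⁻ t in Ioi r, (∫⁻ s in Ici t, ψ s) ∂f.measure
      = ∫⁻ s in Ioi r, ψ s * ENNReal.ofReal (f s - f r) := by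
  set F : ℝ → ℝ → ℝ≥0∞ := fun t s => if t ≤ s then ψ s else 0
  have hF : Measurable (Function.uncurry F) :=
    Measurable.ite (measurableSet_le measurable_fst measurable_snd) (hψ.comp measurable_snd)
      measurable_const
  calc ∫⁻ t in Ioi r, (∫⁻ s in Ici t, ψ s) ∂f.measure
      = ∫⁻ t in Ioi r, (∫⁻ s in Ioi r, F t s) ∂f.measure := by
        refine setLIntegral_congr_fun _root_.measurableSet_Ioi fun t ht => ?_
        have hF_t : (fun s => F t s) = (Ici t).indicator ψ := by
          ext s; simp [F, indicator]
        rw [hF_t, lintegral_indicator measurableSet_Ici,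
          Measure.restrict_restrict measurableSet_Ici, inter_eq_left.mpr (Ici_subset_Ioi.mpr ht)]
    _ = ∫⁻ s in Ioi r, (∫⁻ t in Ioi r, F t s ∂f.measure) :=
        lintegral_lintegral_swap hF.aemeasurable
    _ = ∫⁻ s in Ioi r, ψ s * ENNReal.ofReal (f s - f r) := by
        refine setLIntegral_congr_fun _root_.measurableSet_Ioi fun s hs => ?_
        have hF_s : (fun t => F t s) = (Iic s).indicator fun _ => ψ s := by
          ext t; simp [F, indicator]
        rw [hF_s, lintegral_indicator_const measurableSet_Iic,
          Measure.restrict_apply measurableSet_Iic, Iic_inter_Ioi, measure_Ioc]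

variable (f : StieltjesFunction ℝ) {p r : ℝ}

lemma div_rpow_add_one_mul_sub_nonneg (hp : 0 < p) (hr : 0 < r) {s : ℝ} (hs : r < s) :
    0 ≤ p / s ^ (p + 1) * (f s - f r) :=
  mul_nonneg (by have := hr.trans hs; positivity) (sub_nonneg.mpr (f.mono hs.le))

lemma lintegral_Ioi_ofReal_rpow_neg (hp : 0 < p) (hr : 0 < r) :
    ∫⁻ t in Ioi r, ENNReal.ofReal (t ^ (-p)) ∂f.measure
      = ∫⁻ s in Ioi r, ENNReal.ofReal (p / s ^ (p + 1) * (f s - f r)) := by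
  have hψ : Measurable fun s : ℝ => ENNReal.ofReal (p / s ^ (p + 1)) := by fun_prop
  calc ∫⁻ t in Ioi r, ENNReal.ofReal (t ^ (-p)) ∂f.measure
      = ∫⁻ t in Ioi r, (∫⁻ s in Ici t, ENNReal.ofReal (p / s ^ (p + 1))) ∂f.measure :=
        setLIntegral_congr_fun _root_.measurableSet_Ioi fun t ht =>
          (lintegral_Ici_ofReal_div_rpow_add_one hp (hr.trans ht)).symm
    _ = ∫⁻ s in Ioi r, ENNReal.ofReal (p / s ^ (p + 1)) * ENNReal.ofReal (f s - f r) :=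
        f.setLIntegral_Ioi_lintegral_Ici hψ r
    _ = ∫⁻ s in Ioi r, ENNReal.ofReal (p / s ^ (p + 1) * (f s - f r)) :=
        setLIntegral_congr_fun _root_.measurableSet_Ioi fun s hs =>
          (ENNReal.ofReal_mul (by have := hr.trans hs; positivity)).symm

variable {f}

lemma lintegral_Ioi_ofReal_rpow_neg_eq_ofReal (hp : 0 < p) (hr : 0 < r)
    (hf : IntegrableOn (fun s => f s / s ^ (p + 1)) (Ioi r)) :
    ∫⁻ t in Ioi r, ENNReal.ofReal (t ^ (-p)) ∂f.measure
      = ENNReal.ofReal (∫ s in Ioi r, p / s ^ (p + 1) * (f s - f r)) := by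
  rw [f.lintegral_Ioi_ofReal_rpow_neg hp hr, ofReal_integral_eq_lintegral_ofReal
    (integrableOn_Ioi_div_rpow_add_one_mul_sub hp hr hf)]
  filter_upwards [ae_restrict_mem _root_.measurableSet_Ioi] with s hs
    using f.div_rpow_add_one_mul_sub_nonneg hp hr hs

theorem integrableOn_Ioi_rpow_neg (hp : 0 < p) (hr : 0 < r)
    (hf : IntegrableOn (fun s => f s / s ^ (p + 1)) (Ioi r)) :
    IntegrableOn (fun t : ℝ => t ^ (-p)) (Ioi r) f.measure := by
  refine ⟨(measurable_id.pow_const _).aestronglyMeasurable, ?_⟩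
  rw [hasFiniteIntegral_iff_ofReal, lintegral_Ioi_ofReal_rpow_neg_eq_ofReal hp hr hf]
  · exact ENNReal.ofReal_lt_top
  · filter_upwards [ae_restrict_mem _root_.measurableSet_Ioi] with t ht
    using Real.rpow_nonneg (hr.trans ht).le _

theorem integral_Ioi_rpow_neg (hp : 0 < p) (hr : 0 < r)
    (hf : IntegrableOn (fun s => f s / s ^ (p + 1)) (Ioi r)) :
    ∫ t in Ioi r, t ^ (-p) ∂f.measure
      = -(f r / r ^ p) + p * ∫ t in Ioi r, f t / t ^ (p + 1) := by
  rw [integral_eq_lintegral_of_nonneg_ae, lintegral_Ioi_ofReal_rpow_neg_eq_ofReal hp hr hf,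
    ENNReal.toReal_ofReal, integral_Ioi_div_rpow_add_one_mul_sub hp hr hf]
  · exact setIntegral_nonneg _root_.measurableSet_Ioi fun s hs =>
      f.div_rpow_add_one_mul_sub_nonneg hp hr hs
  · filter_upwards [ae_restrict_mem _root_.measurableSet_Ioi] with t ht
    using Real.rpow_nonneg (hr.trans ht).le _
  · exact (measurable_id.pow_const _).aestronglyMeasurable

end StieltjesFunction

/-- Proposition 1 (i)-(ii) with the integration-by-parts identity, for an increasing
right-continuous function `f` (a Stieltjes function) on `[r₀, ∞)`:
if `∫_{r₀}^∞ |f(t)|/t^{p+1} dt < ∞`, then `f(r)/r^p → 0` (so the type of `f` at order `p`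
near `∞` vanishes), the Stieltjes integral `∫_{(r₀,∞)} t^{-p} df(t)` is finite, and for
every `r ≥ r₀` one has `∫_{(r,∞)} t^{-p} df(t) = -f(r)/r^p + p ∫_r^∞ f(t)/t^{p+1} dt`. -/
theorem convergence_class_at_infty_of_integral
    (p r₀ : ℝ) (hp : 0 < p) (hr₀ : 0 < r₀) (f : StieltjesFunction ℝ)
    (hint : IntegrableOn (fun t : ℝ => |f t| / t ^ (p + 1)) (Ioi r₀) volume) :
    (Tendsto (fun r : ℝ => f r / r ^ p) atTop (nhds 0) ∧
      limsup (fun r : ℝ => max (f r) 0 / r ^ p) atTop = 0) ∧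
    IntegrableOn (fun t : ℝ => t ^ (-p)) (Ioi r₀) f.measure ∧
    ∀ r : ℝ, r₀ ≤ r →
      (∫ t in Ioi r, t ^ (-p) ∂f.measure)
        = -(f r / r ^ p) + p * ∫ t in Ioi r, f t / t ^ (p + 1) := by
  have hf : IntegrableOn (fun t => f t / t ^ (p + 1)) (Ioi r₀) := by
    refine hint.mono' (f.mono.measurable.div (measurable_id.pow_const _)).aestronglyMeasurable ?_
    filter_upwards [ae_restrict_mem measurableSet_Ioi] with t ht
    rw [norm_div, Real.norm_eq_abs, Real.norm_eq_abs,
      abs_of_pos (Real.rpow_pos_of_pos (hr₀.trans ht) _)]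
  have hparts : ∀ r, r₀ ≤ r → ∫ t in Ioi r, t ^ (-p) ∂f.measure
      = -(f r / r ^ p) + p * ∫ t in Ioi r, f t / t ^ (p + 1) := fun r hr =>
    f.integral_Ioi_rpow_neg hp (hr₀.trans_le hr) (hf.mono_set (Ioi_subset_Ioi hr))
  have htend : Tendsto (fun r => f r / r ^ p) atTop (nhds 0) := by
    have hA := tendsto_integral_Ioi_zero (μ := volume) (f := fun t => f t / t ^ (p + 1)) tendsto_id
    have hB := tendsto_integral_Ioi_zero (μ := f.measure) (f := fun t => t ^ (-p)) tendsto_id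
    have h := (hA.const_mul p).sub hB
    rw [mul_zero, sub_zero] at h
    refine h.congr' ?_
    filter_upwards [eventually_ge_atTop r₀] with r hr
    rw [id, hparts r hr]
    ring
  refine ⟨⟨htend, Tendsto.limsup_eq (htend.max_left.congr' ?_)⟩,
    f.integrableOn_Ioi_rpow_neg hp hr₀ hf, hparts⟩
  filter_upwards [eventually_gt_atTop 0] with r hr
  rw [← max_div_div_right (Real.rpow_pos_of_pos hr p).le, zero_div]
end

section
/- Let p ≥ 0, r₀ > 0 and let f : (0, r₀] → ℝ be increasing and right-continuous, with Lebesgue–Stieltjes measure df. If the integral ∫_{0}^{r₀} |f(t)|/t^{p+1} dt is finite, then: (1) lim_{r→0⁺} f(r)·log r = 0 (in particular f(r) → 0 as r → 0⁺); (2) the Stieltjes integral ∫_{(0,r₀)} log t · df(t) is finite (> −∞); and (3) if moreover p > 0, then limsup_{r→0⁺} |f(r)|/r^p = 0 and the Stieltjes integral ∫_{(0,r₀)} t^{−p} df(t) is finite. -/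
/-!
Since `p ≥ 0`, the hypothesis makes `f(t)/t` integrable near `0`; as `f(t) → f(0)` and `1/t` is
not integrable, `f(0) = 0`, so `f ≥ 0` on `(0, r₀]`. For a weight `w ≥ 0` and `r ≤ σ(r) → 0`,
monotonicity gives `f(r) ∫_r^{σ(r)} w ≤ ∫_r^{σ(r)} f w → 0`; with `w = 1/u, σ(r) = √r` this is
`f(r) log r → 0`, and with `w = u^{-p-1}, σ(r) = 2r` it is `f(r)/r^p → 0`. For the Stieltjes integrals write
`h(t) = ∫_t^{r₀} w` and swap the integrals: `∫ h df = ∫ w(u) df((0,u)) du ≤ ∫ w f du < ∞`;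
`-log t` and `t^{-p}` are of this form up to constants.
-/

open MeasureTheory Filter Set
open scoped ENNReal Topology

lemma tendsto_intervalIntegral_nhdsGT {g : ℝ → ℝ} {a b : ℝ} (hab : a < b)
    (hg : IntegrableOn g (Ioo a b)) :
    Tendsto (fun s => ∫ u in a..s, g u) (𝓝[>] a) (𝓝 0) := by
  have hcont := intervalIntegral.continuousWithinAt_primitive (f := g) (μ := volume) (a := a)
    (b₀ := a) (b₁ := a) (b₂ := b) (by simp)
    (by simpa [hab.le, intervalIntegrable_iff_integrableOn_Ioo_of_le] using hg)
  simpa using (hcont.mono_of_mem_nhdsWithin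
    (mem_of_superset (Ioo_mem_nhdsGT hab) Ioo_subset_Icc_self)).tendsto

lemma integrableOn_div_rpow_of_le {g : ℝ → ℝ} {p q r₀ : ℝ} (hpq : p ≤ q)
    (hg : IntegrableOn (fun t => g t / t ^ q) (Ioo 0 r₀)) :
    IntegrableOn (fun t => g t / t ^ p) (Ioo 0 r₀) := by
  have hbdd : ∀ᵐ t ∂volume.restrict (Ioo 0 r₀), ‖t ^ (q - p)‖ ≤ r₀ ^ (q - p) := by
    filter_upwards [ae_restrict_mem measurableSet_Ioo] with t ht
    rw [Real.norm_of_nonneg (Real.rpow_nonneg ht.1.le _)]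
    exact Real.rpow_le_rpow ht.1.le ht.2.le (sub_nonneg.2 hpq)
  have hmul : IntegrableOn (fun t => t ^ (q - p) * (g t / t ^ q)) (Ioo 0 r₀) :=
    hg.bdd_mul (by fun_prop) hbdd
  refine hmul.congr_fun (fun t ht => ?_) measurableSet_Ioo
  show t ^ (q - p) * (g t / t ^ q) = g t / t ^ p
  have hq : t ^ q ≠ 0 := (Real.rpow_pos_of_pos ht.1 q).ne'
  rw [Real.rpow_sub ht.1]
  field_simp

lemma eq_zero_of_tendsto_of_integrableOn_div {g : ℝ → ℝ} {L r₀ : ℝ} (hr₀ : 0 < r₀)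
    (hg : Tendsto g (𝓝[>] 0) (𝓝 L)) (hint : IntegrableOn (fun t => g t / t) (Ioo 0 r₀)) :
    L = 0 := by
  by_contra hL
  have hL' : 0 < |L| := abs_pos.2 hL
  obtain ⟨δ, hδ, hsub⟩ := mem_nhdsGT_iff_exists_Ioo_subset.1
    (hg.abs.eventually (lt_mem_nhds (half_lt_self hL')))
  have hδ' : 0 < min δ r₀ := lt_min hδ hr₀
  have hinv : IntegrableOn (fun t : ℝ => t⁻¹) (Ioo 0 (min δ r₀)) := by
    have hnorm : IntegrableOn (fun t => ‖g t / t‖) (Ioo 0 r₀) := hint.norm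
    refine Integrable.mono'
      ((hnorm.mono_set (Ioo_subset_Ioo_right (min_le_right _ _))).const_mul (2 / |L|))
      measurable_inv.aestronglyMeasurable ?_
    filter_upwards [ae_restrict_mem measurableSet_Ioo] with t ht
    have ht0 : 0 < t := ht.1
    have hgt : |L| / 2 < |g t| := hsub ⟨ht.1, ht.2.trans_le (min_le_left _ _)⟩
    rw [Real.norm_of_nonneg (inv_nonneg.2 ht0.le), norm_div, Real.norm_eq_abs,
      Real.norm_of_nonneg ht0.le]
    rw [div_lt_iff₀ two_pos] at hgt
    field_simp
    linarith
  have hii := (intervalIntegrable_iff_integrableOn_Ioo_of_le hδ'.le).2 hinv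
  exact hδ'.ne (by simpa [hδ'.le] using hii)

theorem Monotone.tendsto_mul_integral_nhdsGT_zero {f w σ : ℝ → ℝ} {r₀ : ℝ} (hf : Monotone f)
    (hf0 : 0 ≤ f 0) (hr₀ : 0 < r₀) (hw : ContinuousOn w (Ioi 0)) (hw0 : ∀ u ∈ Ioi 0, 0 ≤ w u)
    (hfw : IntegrableOn (fun u => f u * w u) (Ioo 0 r₀)) (hσ : Tendsto σ (𝓝[>] 0) (𝓝 0))
    (hσr : ∀ᶠ r in 𝓝[>] 0, r ≤ σ r) :
    Tendsto (fun r => f r * ∫ u in r..σ r, w u) (𝓝[>] 0) (𝓝 0) := by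
  have hF := tendsto_intervalIntegral_nhdsGT hr₀ hfw
  have hσ' : Tendsto σ (𝓝[>] 0) (𝓝[>] 0) := by
    refine tendsto_nhdsWithin_iff.2 ⟨hσ, ?_⟩
    filter_upwards [hσr, self_mem_nhdsWithin] with r hr hr0 using lt_of_lt_of_le hr0 hr
  have hupper := (hF.comp hσ').sub hF
  rw [sub_zero] at hupper
  refine tendsto_of_tendsto_of_tendsto_of_le_of_le' tendsto_const_nhds hupper ?_ ?_
  · filter_upwards [hσr, self_mem_nhdsWithin] with r hr hr0
    exact mul_nonneg (hf0.trans (hf hr0.le))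
      (intervalIntegral.integral_nonneg hr fun u hu => hw0 u (lt_of_lt_of_le hr0 hu.1))
  · filter_upwards [hσr, self_mem_nhdsWithin, hσ.eventually (eventually_lt_nhds hr₀)]
      with r hr hr0 hσr₀
    have hsub : Icc r (σ r) ⊆ Ioi 0 := fun u hu => lt_of_lt_of_le hr0 hu.1
    have hfwi : ∀ s ∈ Icc r (σ r), IntervalIntegrable (fun u => f u * w u) volume 0 s := by
      intro s hs
      refine (intervalIntegrable_iff_integrableOn_Ioo_of_le (hr0.le.trans hs.1)).2
        (hfw.mono_set (Ioo_subset_Ioo_right (hs.2.trans hσr₀.le)))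
    rw [Function.comp_apply, intervalIntegral.integral_interval_sub_left
      (hfwi _ ⟨hr, le_rfl⟩) (hfwi _ ⟨le_rfl, hr⟩), ← intervalIntegral.integral_const_mul]
    refine intervalIntegral.integral_mono_on hr
      ((hw.mono hsub).intervalIntegrable_of_Icc hr |>.const_mul _)
      ((hfwi _ ⟨le_rfl, hr⟩).symm.trans (hfwi _ ⟨hr, le_rfl⟩)) fun u hu => ?_
    exact mul_le_mul_of_nonneg_right (hf hu.1) (hw0 u (hsub hu))

lemma lintegral_Ioo_lintegral_Ioo_swap (μ ν : Measure ℝ) [SFinite μ] [SFinite ν] {b a : ℝ}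
    {w : ℝ → ℝ≥0∞} (hw : Measurable w) :
    ∫⁻ t in Ioo b a, ∫⁻ u in Ioo t a, w u ∂ν ∂μ = ∫⁻ u in Ioo b a, w u * μ (Ioo b u) ∂ν := by
  calc ∫⁻ t in Ioo b a, ∫⁻ u in Ioo t a, w u ∂ν ∂μ
      = ∫⁻ t in Ioo b a, ∫⁻ u in Ioo b a, (Ioi t).indicator w u ∂ν ∂μ := by
        refine setLIntegral_congr_fun measurableSet_Ioo fun t ht => ?_
        rw [lintegral_indicator measurableSet_Ioi, Measure.restrict_restrict measurableSet_Ioi,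
          Ioi_inter_Ioo, max_eq_left ht.1.le]
    _ = ∫⁻ u in Ioo b a, ∫⁻ t in Ioo b a, (Ioi t).indicator w u ∂μ ∂ν := by
        refine lintegral_lintegral_swap (Measurable.aemeasurable ?_)
        have : Function.uncurry (fun t u => (Ioi t).indicator w u) =
            {q : ℝ × ℝ | q.1 < q.2}.indicator (fun q => w q.2) := by
          ext ⟨t, u⟩; simp [Set.indicator_apply]
        rw [this]
        exact (hw.comp measurable_snd).indicator (measurableSet_lt measurable_fst measurable_snd)
    _ = ∫⁻ u in Ioo b a, w u * μ (Ioo b u) ∂ν := by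
        refine setLIntegral_congr_fun measurableSet_Ioo fun u hu => ?_
        have : (fun t => (Ioi t).indicator w u) = (Iio u).indicator fun _ => w u := by
          ext t; simp [Set.indicator_apply]
        rw [this, lintegral_indicator_const measurableSet_Iio,
          Measure.restrict_apply measurableSet_Iio, Iio_inter_Ioo, min_eq_left hu.2.le]

lemma StieltjesFunction.measure_Ioo_le (f : StieltjesFunction ℝ) (a b : ℝ) :
    f.measure (Ioo a b) ≤ ENNReal.ofReal (f b - f a) :=
  f.measure_Ioc a b ▸ measure_mono Ioo_subset_Ioc_self

theorem StieltjesFunction.integrableOn_of_eq_integral_Ioo (f : StieltjesFunction ℝ) {b a : ℝ}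
    {w h : ℝ → ℝ} (hw : Measurable w) (hh : AEStronglyMeasurable h (f.measure.restrict (Ioo b a)))
    (hhw : ∀ t ∈ Ioo b a, h t = ∫ u in Ioo t a, w u)
    (hfw : IntegrableOn (fun u => (f u - f b) * w u) (Ioo b a)) :
    IntegrableOn h (Ioo b a) f.measure := by
  refine ⟨hh, ?_⟩
  calc ∫⁻ t in Ioo b a, ‖h t‖ₑ ∂f.measure
      ≤ ∫⁻ t in Ioo b a, (∫⁻ u in Ioo t a, ‖w u‖ₑ) ∂f.measure :=
        setLIntegral_mono' measurableSet_Ioo fun t ht =>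
          hhw t ht ▸ enorm_integral_le_lintegral_enorm _
    _ = ∫⁻ u in Ioo b a, ‖w u‖ₑ * f.measure (Ioo b u) :=
        lintegral_Ioo_lintegral_Ioo_swap _ _ hw.enorm
    _ ≤ ∫⁻ u in Ioo b a, ‖(f u - f b) * w u‖ₑ := by
        refine setLIntegral_mono' measurableSet_Ioo fun u hu => ?_
        rw [enorm_mul, Real.enorm_of_nonneg (sub_nonneg.2 (f.mono hu.1.le)), mul_comm]
        gcongr
        exact f.measure_Ioo_le b u
    _ < ∞ := hfw.2

lemma integral_rpow_neg_add_one {p a b : ℝ} (hp : p ≠ 0) (ha : 0 < a) (hb : 0 < b) :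
    ∫ u in a..b, u ^ (-(p + 1)) = (a ^ (-p) - b ^ (-p)) / p := by
  have hne : -(p + 1) ≠ -1 := by intro h; apply hp; linarith
  rw [integral_rpow (Or.inr ⟨hne, notMem_uIcc_of_lt ha hb⟩), show -(p + 1) + 1 = -p by ring,
    div_neg, ← neg_div, neg_sub]

theorem Monotone.tendsto_mul_log_nhdsGT_zero {f : ℝ → ℝ} {r₀ : ℝ} (hf : Monotone f)
    (hf0 : 0 ≤ f 0) (hr₀ : 0 < r₀) (hfw : IntegrableOn (fun u => f u * u⁻¹) (Ioo 0 r₀)) :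
    Tendsto (fun r => f r * Real.log r) (𝓝[>] 0) (𝓝 0) := by
  have hsqrt : Tendsto Real.sqrt (𝓝[>] 0) (𝓝 0) :=
    (Real.continuous_sqrt.tendsto' 0 0 Real.sqrt_zero).mono_left nhdsWithin_le_nhds
  have hle : ∀ᶠ r in 𝓝[>] (0 : ℝ), r ≤ Real.sqrt r := by
    filter_upwards [Ioo_mem_nhdsGT one_pos] with r hr
    exact (Real.le_sqrt' hr.1).2 (by nlinarith [hr.1, hr.2])
  have h := (hf.tendsto_mul_integral_nhdsGT_zero hf0 hr₀
    (continuousOn_inv₀.mono fun u hu => ne_of_gt hu) (fun u hu => inv_nonneg.2 (le_of_lt hu))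
    hfw hsqrt hle).const_mul (-2)
  rw [mul_zero] at h
  refine h.congr' ?_
  filter_upwards [self_mem_nhdsWithin] with r (hr : 0 < r)
  rw [integral_inv_of_pos hr (Real.sqrt_pos.2 hr), Real.log_div (Real.sqrt_pos.2 hr).ne' hr.ne',
    Real.log_sqrt hr.le]
  ring

theorem Monotone.tendsto_div_rpow_nhdsGT_zero {f : ℝ → ℝ} {p r₀ : ℝ} (hf : Monotone f)
    (hf0 : 0 ≤ f 0) (hp : 0 < p) (hr₀ : 0 < r₀)
    (hfw : IntegrableOn (fun u => f u * u ^ (-(p + 1))) (Ioo 0 r₀)) :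
    Tendsto (fun r => f r / r ^ p) (𝓝[>] 0) (𝓝 0) := by
  have hdouble : Tendsto (fun r : ℝ => 2 * r) (𝓝[>] 0) (𝓝 0) :=
    ((continuous_const_mul 2).tendsto' 0 0 (mul_zero 2)).mono_left nhdsWithin_le_nhds
  have hle : ∀ᶠ r in 𝓝[>] (0 : ℝ), r ≤ 2 * r := by
    filter_upwards [self_mem_nhdsWithin] with r (hr : 0 < r) using by linarith
  have hc : 0 < 1 - (2 : ℝ) ^ (-p) :=
    sub_pos.2 (Real.rpow_lt_one_of_one_lt_of_neg one_lt_two (neg_lt_zero.2 hp))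
  have h := (hf.tendsto_mul_integral_nhdsGT_zero hf0 hr₀
    (fun u hu => (Real.continuousAt_rpow_const u _ (Or.inl (ne_of_gt hu))).continuousWithinAt)
    (fun u hu => Real.rpow_nonneg (le_of_lt hu) _) hfw hdouble hle).const_mul
    (p / (1 - 2 ^ (-p)))
  rw [mul_zero] at h
  refine h.congr' ?_
  filter_upwards [self_mem_nhdsWithin] with r (hr : 0 < r)
  rw [integral_rpow_neg_add_one hp.ne' hr (by positivity), Real.mul_rpow zero_le_two hr.le,
    Real.rpow_neg hr.le]
  have : r ^ p ≠ 0 := (Real.rpow_pos_of_pos hr p).ne'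
  field_simp

theorem StieltjesFunction.integrableOn_log (f : StieltjesFunction ℝ) {r₀ : ℝ} (hr₀ : 0 < r₀)
    (hfw : IntegrableOn (fun u => (f u - f 0) * u⁻¹) (Ioo 0 r₀)) :
    IntegrableOn Real.log (Ioo 0 r₀) f.measure := by
  have h := f.integrableOn_of_eq_integral_Ioo (h := fun t => Real.log r₀ - Real.log t)
    measurable_inv (by fun_prop) (fun t ht => ?_) hfw
  · refine ((integrableOn_const (C := Real.log r₀) measure_Ioo_lt_top.ne).sub h).congr_fun
      (fun t _ => ?_) measurableSet_Ioo
    simp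
  · rw [← integral_Ioc_eq_integral_Ioo, ← intervalIntegral.integral_of_le ht.2.le,
      integral_inv_of_pos ht.1 hr₀, Real.log_div hr₀.ne' ht.1.ne']

theorem StieltjesFunction.integrableOn_rpow_neg (f : StieltjesFunction ℝ) {p r₀ : ℝ} (hp : 0 < p)
    (hr₀ : 0 < r₀) (hfw : IntegrableOn (fun u => (f u - f 0) * u ^ (-(p + 1))) (Ioo 0 r₀)) :
    IntegrableOn (fun t => t ^ (-p)) (Ioo 0 r₀) f.measure := by
  have h := f.integrableOn_of_eq_integral_Ioo (h := fun t => (t ^ (-p) - r₀ ^ (-p)) / p)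
    (by fun_prop) (by fun_prop) (fun t ht => ?_) hfw
  · have h' : IntegrableOn (fun t => p * ((t ^ (-p) - r₀ ^ (-p)) / p) + r₀ ^ (-p))
        (Ioo 0 r₀) f.measure := (h.const_mul p).add (integrableOn_const measure_Ioo_lt_top.ne)
    refine h'.congr_fun (fun t _ => ?_) measurableSet_Ioo
    field_simp
    ring
  · rw [← integral_Ioc_eq_integral_Ioo, ← intervalIntegral.integral_of_le ht.2.le,
      integral_rpow_neg_add_one hp.ne' ht.1 hr₀]

/-- Proposition 2 (i)-(ii), for an increasing right-continuous function `f` (a Stieltjes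
function) near `0`: if `∫_0^{r₀} |f(t)|/t^{p+1} dt < ∞` (convergence class at order
`p ≥ 0` near `0`), then `f(r)·log r → 0` as `r → 0⁺` (in particular `f(r) → 0`),
the Stieltjes integral `∫_{(0,r₀)} log t · df(t)` is finite, and if moreover `p > 0`
then the type of vanishing `limsup_{r→0⁺} |f(r)|/r^p` is `0` and the Stieltjes integral
`∫_{(0,r₀)} t^{-p} df(t)` is finite. -/
theorem convergence_class_at_zero_of_integral
    (p r₀ : ℝ) (hp : 0 ≤ p) (hr₀ : 0 < r₀) (f : StieltjesFunction ℝ)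
    (hint : IntegrableOn (fun t : ℝ => |f t| / t ^ (p + 1)) (Ioo 0 r₀) volume) :
    (Tendsto (fun r : ℝ => f r * Real.log r) (nhdsWithin 0 (Ioi 0)) (nhds 0) ∧
      Tendsto (fun r : ℝ => f r) (nhdsWithin 0 (Ioi 0)) (nhds 0)) ∧
    IntegrableOn (fun t : ℝ => Real.log t) (Ioo 0 r₀) f.measure ∧
    (0 < p →
      limsup (fun r : ℝ => |f r| / r ^ p) (nhdsWithin 0 (Ioi 0)) = 0 ∧
      IntegrableOn (fun t : ℝ => t ^ (-p)) (Ioo 0 r₀) f.measure) := by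
  have hcont : Tendsto f (𝓝[>] 0) (𝓝 (f 0)) :=
    (f.right_continuous 0).tendsto.mono_left (nhdsWithin_mono _ Ioi_subset_Ici_self)
  have hdiv : IntegrableOn (fun t => |f t| / t) (Ioo 0 r₀) := by
    simpa using integrableOn_div_rpow_of_le (p := 1) (by linarith) hint
  have hf0 : f 0 = 0 := abs_eq_zero.1 (eq_zero_of_tendsto_of_integrableOn_div hr₀ hcont.abs hdiv)
  have habs : ∀ t ∈ Ioo 0 r₀, |f t| = f t := fun t ht =>
    abs_of_nonneg (hf0 ▸ f.mono ht.1.le)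
  have hlog : IntegrableOn (fun t => f t * t⁻¹) (Ioo 0 r₀) :=
    hdiv.congr_fun (fun t ht => by simp only [habs t ht, div_eq_mul_inv]) measurableSet_Ioo
  have hrpow : IntegrableOn (fun t => f t * t ^ (-(p + 1))) (Ioo 0 r₀) :=
    hint.congr_fun (fun t ht => by simp only [habs t ht, Real.rpow_neg ht.1.le, div_eq_mul_inv])
      measurableSet_Ioo
  refine ⟨⟨f.mono.tendsto_mul_log_nhdsGT_zero hf0.ge hr₀ hlog, by rwa [hf0] at hcont⟩,
    f.integrableOn_log hr₀ (by simpa only [hf0, sub_zero] using hlog), fun hp0 => ⟨?_,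
    f.integrableOn_rpow_neg hp0 hr₀ (by simpa only [hf0, sub_zero] using hrpow)⟩⟩
  refine ((f.mono.tendsto_div_rpow_nhdsGT_zero hf0.ge hp0 hr₀ hrpow).congr' ?_).limsup_eq
  filter_upwards [Ioo_mem_nhdsGT hr₀] with t ht
  rw [habs t ht]
end

section
/- Let t₁ < t₂ be real, b > 1, and let z be a complex number with Im z > 0 satisfying |z − (t₁+t₂)/2| ≥ b·(t₂−t₁)/2 (so z lies outside the open half-disk scaled by b over the segment [t₁,t₂]). Then ω(z,[t₁,t₂]) ≥ ((b−1)/(2πb)) · (t₂−t₁)·Im z / (|z|² − Re z·(t₁+t₂) + t₁t₂) ≥ ((b−1)/(2πb)) · (t₂−t₁)·Im z / ((|z| + |t₁|)·(|z| + |t₂|)). -/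
/-!
Put `D = ‖z‖² - Re z·(t₁+t₂) + t₁t₂ = (t₂ - Re z)(t₁ - Re z) + (Im z)² = ‖z - c‖² - r²`, with `c`
the midpoint and `r` the half-length of the segment. The arctan subtraction formula gives
`π·ω(z,[t₁,t₂]) = arctan u` with `u = (t₂-t₁)·Im z / D`. As `Im z ≤ ‖z - c‖` and `‖z - c‖ ≥ b r`,
`u ≤ (b+1)/(b-1)`, and then `arctan u ≥ sin (arctan u) = u/√(1+u²) ≥ u/(1+u) ≥ (b-1)/(2b)·u`.
The second inequality is `D ≤ (‖z‖ + |t₁|)(‖z‖ + |t₂|)`.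
-/

open Real

/-- The harmonic measure of the segment `[t₁, t₂] ⊂ ℝ` at a point `z` of the open upper
half-plane: `ω(z,[t₁,t₂]) = (1/π)·(arctan((t₂ - Re z)/Im z) - arctan((t₁ - Re z)/Im z))`. -/
noncomputable def hmUHP (z : ℂ) (t₁ t₂ : ℝ) : ℝ :=
  (1 / Real.pi) *
    (Real.arctan ((t₂ - z.re) / z.im) - Real.arctan ((t₁ - z.re) / z.im))

namespace Real

theorem arctan_sub_arctan {x y : ℝ} (h : 0 < 1 + x * y) :
    arctan x - arctan y = arctan ((x - y) / (1 + x * y)) := by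
  rw [sub_eq_add_neg, ← arctan_neg, arctan_add (by linarith), sub_eq_add_neg, mul_neg, neg_neg,
    ← sub_eq_add_neg]

theorem div_one_add_le_arctan {u : ℝ} (hu : 0 ≤ u) : u / (1 + u) ≤ arctan u :=
  calc u / (1 + u) ≤ u / √(1 + u ^ 2) := by
        gcongr
        rw [sqrt_le_left (by linarith)]
        nlinarith
    _ = sin (arctan u) := (sin_arctan u).symm
    _ ≤ arctan u := sin_le (arctan_nonneg.2 hu)

theorem mul_le_arctan_of_le_div {b u : ℝ} (hb : 1 < b) (hu : 0 ≤ u)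
    (hub : u ≤ (b + 1) / (b - 1)) : (b - 1) / (2 * b) * u ≤ arctan u := by
  refine le_trans ?_ (div_one_add_le_arctan hu)
  rw [le_div_iff₀ (by linarith : (0 : ℝ) < b - 1)] at hub
  rw [div_mul_eq_mul_div, div_le_div_iff₀ (by linarith) (by linarith)]
  nlinarith

end Real

theorem two_mul_mul_div_sq_sub_sq_le {b r ρ y : ℝ} (hb : 1 < b) (hr : 0 < r) (hρ : b * r ≤ ρ)
    (hy : y ≤ ρ) : 2 * r * y / (ρ ^ 2 - r ^ 2) ≤ (b + 1) / (b - 1) := by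
  have hbr : r < b * r := lt_mul_left hr hb
  rw [div_le_div_iff₀ (by nlinarith) (by linarith)]
  nlinarith [mul_le_mul_of_nonneg_left hy (by nlinarith : (0 : ℝ) ≤ 2 * r * (b - 1))]

namespace Complex

variable (z : ℂ) (t₁ t₂ : ℝ)

theorem norm_sq_sub_re_mul_add_mul_eq_mul_add_im_sq :
    ‖z‖ ^ 2 - z.re * (t₁ + t₂) + t₁ * t₂ = (t₂ - z.re) * (t₁ - z.re) + z.im ^ 2 := by
  rw [Complex.sq_norm, normSq_apply]; ring

theorem norm_sq_sub_re_mul_add_mul_eq_norm_sub_midpoint_sq :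
    ‖z‖ ^ 2 - z.re * (t₁ + t₂) + t₁ * t₂ =
      ‖z - (((t₁ + t₂) / 2 : ℝ) : ℂ)‖ ^ 2 - ((t₂ - t₁) / 2) ^ 2 := by
  simp only [Complex.sq_norm, normSq_apply, sub_re, sub_im, ofReal_re, ofReal_im]; ring

theorem norm_sq_sub_re_mul_add_mul_le :
    ‖z‖ ^ 2 - z.re * (t₁ + t₂) + t₁ * t₂ ≤ (‖z‖ + |t₁|) * (‖z‖ + |t₂|) := by
  have hre := abs_re_le_norm z
  nlinarith [neg_abs_le (z.re * t₁), neg_abs_le (z.re * t₂), abs_mul z.re t₁, abs_mul z.re t₂,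
    mul_le_mul_of_nonneg_right hre (abs_nonneg t₁), mul_le_mul_of_nonneg_right hre (abs_nonneg t₂),
    le_abs_self (t₁ * t₂), abs_mul t₁ t₂]

end Complex

theorem hmUHP_eq_arctan {z : ℂ} {t₁ t₂ : ℝ} (hz : 0 < z.im)
    (hD : 0 < ‖z‖ ^ 2 - z.re * (t₁ + t₂) + t₁ * t₂) :
    hmUHP z t₁ t₂ =
      1 / π * arctan ((t₂ - t₁) * z.im / (‖z‖ ^ 2 - z.re * (t₁ + t₂) + t₁ * t₂)) := by
  rw [Complex.norm_sq_sub_re_mul_add_mul_eq_mul_add_im_sq] at hD ⊢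
  have h1 : 1 + (t₂ - z.re) / z.im * ((t₁ - z.re) / z.im) =
      ((t₂ - z.re) * (t₁ - z.re) + z.im ^ 2) / z.im ^ 2 := by
    field_simp
    ring
  rw [hmUHP, arctan_sub_arctan (by rw [h1]; positivity), h1]
  congr 2
  field_simp
  ring

/-- Proposition `es:qmlw`: if `b > 1` and `z` in the upper half-plane satisfies
`|z - (t₁+t₂)/2| ≥ b·(t₂-t₁)/2`, then
`ω(z,[t₁,t₂]) ≥ ((b-1)/(2πb))·(t₂-t₁)·Im z/(|z|² - Re z·(t₁+t₂) + t₁t₂)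
              ≥ ((b-1)/(2πb))·(t₂-t₁)·Im z/((|z|+|t₁|)·(|z|+|t₂|))`. -/
theorem hmUHP_lower_bound_outside_scaled_halfdisk
    (t₁ t₂ : ℝ) (h12 : t₁ < t₂) (b : ℝ) (hb : 1 < b) (z : ℂ) (hz : 0 < z.im)
    (hout : b * ((t₂ - t₁) / 2) ≤ ‖z - ((((t₁ + t₂) / 2 : ℝ)) : ℂ)‖) :
    ((b - 1) / (2 * Real.pi * b)) * ((t₂ - t₁) * z.im /
        (‖z‖ ^ 2 - z.re * (t₁ + t₂) + t₁ * t₂)) ≤ hmUHP z t₁ t₂ ∧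
    ((b - 1) / (2 * Real.pi * b)) * ((t₂ - t₁) * z.im /
        ((‖z‖ + |t₁|) * (‖z‖ + |t₂|)))
      ≤ ((b - 1) / (2 * Real.pi * b)) * ((t₂ - t₁) * z.im /
        (‖z‖ ^ 2 - z.re * (t₁ + t₂) + t₁ * t₂)) := by
  set D := ‖z‖ ^ 2 - z.re * (t₁ + t₂) + t₁ * t₂
  have hD : D = ‖z - (((t₁ + t₂) / 2 : ℝ) : ℂ)‖ ^ 2 - ((t₂ - t₁) / 2) ^ 2 :=
    Complex.norm_sq_sub_re_mul_add_mul_eq_norm_sub_midpoint_sq z t₁ t₂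
  have hr : 0 < (t₂ - t₁) / 2 := by linarith
  have hbr : (t₂ - t₁) / 2 < b * ((t₂ - t₁) / 2) := lt_mul_left hr hb
  have hD_pos : 0 < D := by rw [hD]; nlinarith
  have him : z.im ≤ ‖z - (((t₁ + t₂) / 2 : ℝ) : ℂ)‖ := by
    simpa using Complex.im_le_norm (z - (((t₁ + t₂) / 2 : ℝ) : ℂ))
  have hu : (t₂ - t₁) * z.im / D ≤ (b + 1) / (b - 1) := by
    calc (t₂ - t₁) * z.im / D
        = 2 * ((t₂ - t₁) / 2) * z.im /
            (‖z - (((t₁ + t₂) / 2 : ℝ) : ℂ)‖ ^ 2 - ((t₂ - t₁) / 2) ^ 2) := by rw [hD]; ring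
      _ ≤ (b + 1) / (b - 1) := two_mul_mul_div_sq_sub_sq_le hb hr hout him
  refine ⟨?_, ?_⟩
  · rw [hmUHP_eq_arctan hz hD_pos, show (b - 1) / (2 * π * b) = 1 / π * ((b - 1) / (2 * b)) by
      field_simp, mul_assoc]
    exact mul_le_mul_of_nonneg_left (mul_le_arctan_of_le_div hb (by positivity) hu) (by positivity)
  · gcongr
    exact Complex.norm_sq_sub_re_mul_add_mul_le z t₁ t₂
end

section
/- Let t₁ < t₂ be real, a ∈ (0,1), and let z be a complex number with Im z > 0 satisfying a·|z| ≥ max(|t₁|,|t₂|). Then ω(z,[t₁,t₂]) ≥ (t₂−t₁)·(1−a)/(8π) · Im z/|z|². -/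
open Real

/-! The harmonic measure is the integral over `[t₁, t₂]` of the Poisson kernel
`Im z / (π |t - z|²)`, which is at least `Im z / (4π |z|²)` whenever `|t| ≤ |z|`, because then
`|t - z| ≤ 2|z|`. Integrating (here: the mean value inequality for the arctangent) gives
`ω ≥ (t₂ - t₁) Im z / (4π |z|²)`, which dominates the claimed bound as `(1 - a)/8 ≤ 1/4`. -/

lemma sq_norm_ofReal_sub (t : ℝ) (z : ℂ) : ‖(t : ℂ) - z‖ ^ 2 = (t - z.re) ^ 2 + z.im ^ 2 := by
  rw [Complex.sq_norm, Complex.normSq_apply]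
  simp only [Complex.sub_re, Complex.sub_im, Complex.ofReal_re, Complex.ofReal_im]
  ring

noncomputable def poissonKernelUHP (z : ℂ) (t : ℝ) : ℝ :=
  z.im / (π * ‖(t : ℂ) - z‖ ^ 2)

lemma hasDerivAt_hmUHP_right {z : ℂ} (hz : z.im ≠ 0) (t₁ t : ℝ) :
    HasDerivAt (hmUHP z t₁) (poissonKernelUHP z t) t := by
  have h := ((((hasDerivAt_id t).sub_const z.re).div_const z.im).arctan.sub_const
    (arctan ((t₁ - z.re) / z.im))).const_mul (1 / π)
  refine h.congr_deriv ?_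
  rw [poissonKernelUHP, sq_norm_ofReal_sub, id]
  field_simp
  ring

lemma mul_sub_le_hmUHP {z : ℂ} (hz : z.im ≠ 0) {t₁ t₂ C : ℝ} (h12 : t₁ ≤ t₂)
    (hC : ∀ t ∈ Set.Icc t₁ t₂, C ≤ poissonKernelUHP z t) :
    C * (t₂ - t₁) ≤ hmUHP z t₁ t₂ := by
  have hderiv := hasDerivAt_hmUHP_right hz t₁
  have h := (convex_Icc t₁ t₂).mul_sub_le_image_sub_of_le_deriv (f := hmUHP z t₁)
    (fun t _ => (hderiv t).continuousAt.continuousWithinAt)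
    (fun t _ => (hderiv t).differentiableAt.differentiableWithinAt)
    (fun t ht => (hderiv t).deriv ▸ hC t (interior_subset ht))
    t₁ (Set.left_mem_Icc.2 h12) t₂ (Set.right_mem_Icc.2 h12) h12
  simpa [hmUHP] using h

lemma norm_ofReal_sub_le_two_mul {t : ℝ} {z : ℂ} (ht : |t| ≤ ‖z‖) :
    ‖(t : ℂ) - z‖ ≤ 2 * ‖z‖ := by
  calc ‖(t : ℂ) - z‖ ≤ ‖(t : ℂ)‖ + ‖z‖ := norm_sub_le _ _
    _ ≤ 2 * ‖z‖ := by rw [Complex.norm_real, Real.norm_eq_abs]; linarith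

lemma div_le_poissonKernelUHP {t : ℝ} {z : ℂ} (hz : 0 < z.im) (ht : |t| ≤ ‖z‖) :
    z.im / (4 * π * ‖z‖ ^ 2) ≤ poissonKernelUHP z t := by
  rw [poissonKernelUHP]
  have hzt : 0 < ‖(t : ℂ) - z‖ := by
    rw [norm_pos_iff, sub_ne_zero]
    intro h
    simpa [← h] using hz.ne'
  apply div_le_div_of_nonneg_left hz.le (by positivity)
  have := pow_le_pow_left₀ hzt.le (norm_ofReal_sub_le_two_mul ht) 2
  nlinarith [pi_pos]

/-- Proposition `pr:gmA+`: for `a ∈ (0,1)` and `z` in the upper half-plane with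
`a·|z| ≥ max(|t₁|,|t₂|)`, one has `ω(z,[t₁,t₂]) ≥ (t₂-t₁)·(1-a)/(8π)·Im z/|z|²`. -/
theorem hmUHP_lower_bound_far
    (t₁ t₂ : ℝ) (h12 : t₁ < t₂) (a : ℝ) (ha : a ∈ Set.Ioo (0 : ℝ) 1)
    (z : ℂ) (hz : 0 < z.im) (hfar : max |t₁| |t₂| ≤ a * ‖z‖) :
    (t₂ - t₁) * (1 - a) / (8 * Real.pi) * (z.im / ‖z‖ ^ 2)
      ≤ hmUHP z t₁ t₂ := by
  have hnear : ∀ t ∈ Set.Icc t₁ t₂, |t| ≤ ‖z‖ := fun t ht =>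
    calc |t| ≤ max |t₁| |t₂| := abs_le_max_abs_abs ht.1 ht.2
      _ ≤ a * ‖z‖ := hfar
      _ ≤ ‖z‖ := mul_le_of_le_one_left (norm_nonneg z) ha.2.le
  have hmain := mul_sub_le_hmUHP hz.ne' h12.le fun t ht =>
    div_le_poissonKernelUHP hz (hnear t ht)
  have hP : 0 ≤ (t₂ - t₁) * (z.im / (π * ‖z‖ ^ 2)) := by
    have := sub_pos.2 h12
    positivity
  calc (t₂ - t₁) * (1 - a) / (8 * π) * (z.im / ‖z‖ ^ 2)
      = (1 - a) / 8 * ((t₂ - t₁) * (z.im / (π * ‖z‖ ^ 2))) := by field_simp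
    _ ≤ 1 / 4 * ((t₂ - t₁) * (z.im / (π * ‖z‖ ^ 2))) := by gcongr <;> linarith [ha.1]
    _ = z.im / (4 * π * ‖z‖ ^ 2) * (t₂ - t₁) := by field_simp
    _ ≤ hmUHP z t₁ t₂ := hmain
end

section
/- Let 0 ≤ t₁ < t₂ < ∞ and let z be a complex number with Im z > 0. (1) If Re z ≤ 0 (i.e. π/2 ≤ arg z < π), then ω(z,[t₁,t₂]) ≤ (t₂−t₁)·(1/π)·Im z/|z|². (2) If Re z·(t₁+t₂) < 2·|z|·√(t₁t₂) (i.e. cos(arg z) < 2√(t₁t₂)/(t₁+t₂)) and |z| ≠ √(t₁t₂), then ω(z,[t₁,t₂]) ≤ (t₂−t₁)·Im z / (π·(|z| − √(t₁t₂))²). (3) If a ∈ (0,1) and Re z·(t₁+t₂) ≤ 2a·|z|·√(t₁t₂), then ω(z,[t₁,t₂]) ≤ (t₂−t₁)/(π·(1−a²)) · Im z/|z|². -/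
/-!
Write `z = x + iy` and `s = √(t₁t₂)`. The subtraction formula for `arctan` gives
`π ω(z,[t₁,t₂]) = arctan ((t₂ - t₁) y / D)` with `D = y² + (t₂ - x)(t₁ - x) = |z|² + s² - x(t₁ + t₂)`
as long as `D > 0`, so `arctan w ≤ w` yields `ω ≤ (t₂ - t₁) y / (π D)`. Each hypothesis on
`Re z` is then a positive lower bound on `D`: `|z|²` when `x ≤ 0`, `(|z| - s)²` when
`x(t₁ + t₂) < 2|z|s`, and `(1 - a²)|z|²` when `x(t₁ + t₂) ≤ 2a|z|s`, because
`|z|² + s² - 2a|z|s = (s - a|z|)² + (1 - a²)|z|²`.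
-/

open Real

namespace Real

theorem arctan_le_self {x : ℝ} (hx : 0 ≤ x) : arctan x ≤ x :=
  calc arctan x ≤ tan (arctan x) := le_tan (arctan_nonneg.mpr hx) (arctan_lt_pi_div_two x)
    _ = x := tan_arctan x

theorem arctan_sub_arctan_le {u v : ℝ} (hvu : v ≤ u) (huv : -1 < u * v) :
    arctan u - arctan v ≤ (u - v) / (1 + u * v) := by
  have hsub : arctan u - arctan v = arctan ((u - v) / (1 + u * v)) := by
    rw [sub_eq_add_neg, ← arctan_neg, arctan_add (by linarith [mul_neg u v])]
    congr 2; ring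
  rw [hsub]
  exact arctan_le_self (div_nonneg (by linarith) (by linarith))

end Real

theorem im_sq_add_sub_re_mul_sub_re (z : ℂ) (t₁ t₂ : ℝ) :
    z.im ^ 2 + (t₂ - z.re) * (t₁ - z.re) = ‖z‖ ^ 2 + t₁ * t₂ - z.re * (t₁ + t₂) := by
  rw [Complex.sq_norm, Complex.normSq_apply]
  ring

theorem hmUHP_le_of_le {z : ℂ} {t₁ t₂ L : ℝ} (hz : 0 < z.im) (h12 : t₁ ≤ t₂) (hL : 0 < L)
    (hLD : L ≤ z.im ^ 2 + (t₂ - z.re) * (t₁ - z.re)) :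
    hmUHP z t₁ t₂ ≤ (t₂ - t₁) * z.im / (π * L) := by
  set x := z.re
  set y := z.im
  have hD : 0 < y ^ 2 + (t₂ - x) * (t₁ - x) := hL.trans_le hLD
  have hquot : ((t₂ - x) / y - (t₁ - x) / y) / (1 + (t₂ - x) / y * ((t₁ - x) / y))
      = (t₂ - t₁) * y / (y ^ 2 + (t₂ - x) * (t₁ - x)) := by
    field_simp
    ring
  have hprod : -1 < (t₂ - x) / y * ((t₁ - x) / y) := by
    rw [div_mul_div_comm, ← sq, lt_div_iff₀ (by positivity)]
    linarith
  have hdiff := Real.arctan_sub_arctan_le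
    (div_le_div_of_nonneg_right (sub_le_sub_right h12 x) hz.le) hprod
  rw [hquot] at hdiff
  calc hmUHP z t₁ t₂ ≤ (1 / π) * ((t₂ - t₁) * y / (y ^ 2 + (t₂ - x) * (t₁ - x))) :=
        mul_le_mul_of_nonneg_left hdiff (by positivity)
    _ ≤ (1 / π) * ((t₂ - t₁) * y / L) := by gcongr
    _ = (t₂ - t₁) * y / (π * L) := by field_simp

/-- Proposition `pr:gmAa`: for `0 ≤ t₁ < t₂` and `z` in the upper half-plane:
(1) if `Re z ≤ 0` then `ω(z,[t₁,t₂]) ≤ (t₂-t₁)·(1/π)·Im z/|z|²`;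
(2) if `cos(arg z) < 2√(t₁t₂)/(t₁+t₂)`, i.e. `Re z·(t₁+t₂) < 2|z|·√(t₁t₂)`, and
`|z| ≠ √(t₁t₂)`, then `ω(z,[t₁,t₂]) ≤ (t₂-t₁)·Im z/(π(|z| - √(t₁t₂))²)`;
(3) if `a ∈ (0,1)` and `Re z·(t₁+t₂) ≤ 2a|z|·√(t₁t₂)`, then
`ω(z,[t₁,t₂]) ≤ (t₂-t₁)/(π(1-a²))·Im z/|z|²`. -/
theorem hmUHP_upper_bounds_positive_segment
    (t₁ t₂ : ℝ) (h1 : 0 ≤ t₁) (h12 : t₁ < t₂) (z : ℂ) (hz : 0 < z.im) :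
    (z.re ≤ 0 →
      hmUHP z t₁ t₂ ≤ (t₂ - t₁) * (1 / Real.pi) * (z.im / ‖z‖ ^ 2)) ∧
    (z.re * (t₁ + t₂) < 2 * ‖z‖ * Real.sqrt (t₁ * t₂) →
      ‖z‖ ≠ Real.sqrt (t₁ * t₂) →
      hmUHP z t₁ t₂
        ≤ (t₂ - t₁) * z.im / (Real.pi * (‖z‖ - Real.sqrt (t₁ * t₂)) ^ 2)) ∧
    (∀ a ∈ Set.Ioo (0 : ℝ) 1,
      z.re * (t₁ + t₂) ≤ 2 * a * ‖z‖ * Real.sqrt (t₁ * t₂) →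
      hmUHP z t₁ t₂
        ≤ (t₂ - t₁) / (Real.pi * (1 - a ^ 2)) * (z.im / ‖z‖ ^ 2)) := by
  have hnorm : 0 < ‖z‖ := norm_pos_iff.mpr fun h => by simp [h] at hz
  have hs : √(t₁ * t₂) ^ 2 = t₁ * t₂ := sq_sqrt (mul_nonneg h1 (by linarith))
  have hD := im_sq_add_sub_re_mul_sub_re z t₁ t₂
  refine ⟨fun hre => ?_, fun hlt hne => ?_, fun a ⟨ha0, ha1⟩ hle => ?_⟩
  · have hbound : ‖z‖ ^ 2 ≤ z.im ^ 2 + (t₂ - z.re) * (t₁ - z.re) := by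
      nlinarith [mul_nonneg h1 (h1.trans h12.le)]
    calc hmUHP z t₁ t₂ ≤ (t₂ - t₁) * z.im / (π * ‖z‖ ^ 2) :=
          hmUHP_le_of_le hz h12.le (by positivity) hbound
      _ = _ := by field_simp
  · have hbound : (‖z‖ - √(t₁ * t₂)) ^ 2 ≤ z.im ^ 2 + (t₂ - z.re) * (t₁ - z.re) := by
      nlinarith
    exact hmUHP_le_of_le hz h12.le (by positivity [sub_ne_zero.mpr hne]) hbound
  · have hbound : (1 - a ^ 2) * ‖z‖ ^ 2 ≤ z.im ^ 2 + (t₂ - z.re) * (t₁ - z.re) := by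
      nlinarith [sq_nonneg (√(t₁ * t₂) - a * ‖z‖)]
    have ha : 0 < 1 - a ^ 2 := by nlinarith
    calc hmUHP z t₁ t₂ ≤ (t₂ - t₁) * z.im / (π * ((1 - a ^ 2) * ‖z‖ ^ 2)) :=
          hmUHP_le_of_le hz h12.le (by positivity) hbound
      _ = _ := by field_simp
end

section
/- Let 0 ≤ t₁ < t₂ < ∞, set x₀ := (t₁+t₂)/2 and r := (t₂−t₁)/2, and let z be a complex number with Im z > 0. (1) If |z − x₀| > r, then ω(z,[t₁,t₂]) ≤ (1/π)·arctan( 2r·|z−x₀| / (|z−x₀|² − r²) ). (2) If |z − x₀| = r, then ω(z,[t₁,t₂]) = 1/2. (3) If 0 < |z − x₀| < r, then ω(z,[t₁,t₂]) ≥ 1 − (1/π)·arctan( 2r·|z−x₀| / (r² − |z−x₀|²) ) ≥ 1 − (1/π)·2r·|z−x₀| / (r² − |z−x₀|²). (4) Moreover, writing z − x₀ = t·e^{iθ} with 0 < t < r and 0 < θ < π, one has the exact formula ω(z,[t₁,t₂]) = 1 − (1/π)·arctan( 2·r·t·sin θ / (r² − t²) ), whose minimum over θ ∈ (0,π) at fixed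 t is attained at θ = π/2. -/
open Real

/-!
Write `a = Re z - x₀` and `y = Im z`, so that `ω(z,[t₁,t₂]) = (1/π)(arctan u + arctan v)` with
`u = (r - a)/y`, `v = (r + a)/y`. The addition formula for `arctan` turns this into
`arctan (2ry / (|z - x₀|² - r²))`, up to the branch: `uv < 1`, `uv = 1` or `uv > 1` according as
`z` lies outside, on or inside the circle `|z - x₀| = r`, and in the last two cases the sum picks
up `π/2` resp. `π`. The bounds then follow from `Im z ≤ |z - x₀|`, the monotonicity of `arctan`
and `arctan x ≤ x` for `x ≥ 0`; in polar coordinates `Im z = t sin θ`, which is largest at `θ = π/2`.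
-/

lemma arctan_le_self_of_nonneg {x : ℝ} (hx : 0 ≤ x) : arctan x ≤ x :=
  calc arctan x ≤ tan (arctan x) := le_tan (arctan_nonneg.mpr hx) (arctan_lt_pi_div_two x)
    _ = x := tan_arctan x

section ArctanSum

variable {a y r : ℝ}

lemma sub_div_mul_add_div_eq :
    (r - a) / y * ((r + a) / y) = (r ^ 2 - a ^ 2) / y ^ 2 := by
  ring

lemma sub_div_add_add_div_div_one_sub_mul (hy : y ≠ 0) :
    ((r - a) / y + (r + a) / y) / (1 - (r - a) / y * ((r + a) / y)) =
      2 * r * y / (a ^ 2 + y ^ 2 - r ^ 2) := by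
  rw [sub_div_mul_add_div_eq]
  field_simp
  ring

lemma arctan_sub_div_add_arctan_add_div_of_lt (hy : 0 < y) (h : r ^ 2 < a ^ 2 + y ^ 2) :
    arctan ((r - a) / y) + arctan ((r + a) / y) =
      arctan (2 * r * y / (a ^ 2 + y ^ 2 - r ^ 2)) := by
  have huv : (r - a) / y * ((r + a) / y) < 1 := by
    rw [sub_div_mul_add_div_eq, div_lt_one (by positivity)]
    linarith
  rw [arctan_add huv, sub_div_add_add_div_div_one_sub_mul hy.ne']

lemma arctan_sub_div_add_arctan_add_div_of_eq (hy : 0 < y) (hr : 0 ≤ r)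
    (h : a ^ 2 + y ^ 2 = r ^ 2) :
    arctan ((r - a) / y) + arctan ((r + a) / y) = π / 2 := by
  have hu : 0 < (r - a) / y := div_pos (by nlinarith) hy
  have huv : (r - a) / y * ((r + a) / y) = 1 := by
    rw [sub_div_mul_add_div_eq, div_eq_one_iff_eq (by positivity)]
    linarith
  rw [eq_inv_of_mul_eq_one_right huv, arctan_inv_of_pos hu]
  ring

lemma arctan_sub_div_add_arctan_add_div_of_gt (hy : 0 < y) (hr : 0 ≤ r)
    (h : a ^ 2 + y ^ 2 < r ^ 2) :
    arctan ((r - a) / y) + arctan ((r + a) / y) =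
      π - arctan (2 * r * y / (r ^ 2 - (a ^ 2 + y ^ 2))) := by
  have hu : 0 < (r - a) / y := div_pos (by nlinarith) hy
  have huv : 1 < (r - a) / y * ((r + a) / y) := by
    rw [sub_div_mul_add_div_eq, one_lt_div (by positivity)]
    linarith
  rw [arctan_add_eq_add_pi huv hu, sub_div_add_add_div_div_one_sub_mul hy.ne',
    ← neg_sub, div_neg, arctan_neg]
  ring

end ArctanSum

section HalfDisk

lemma norm_sub_ofReal_sq (z : ℂ) (c : ℝ) : ‖z - c‖ ^ 2 = (z.re - c) ^ 2 + z.im ^ 2 := by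
  rw [Complex.sq_norm, Complex.normSq_apply]
  simp only [Complex.sub_re, Complex.sub_im, Complex.ofReal_re, Complex.ofReal_im, sub_zero]
  ring

lemma im_le_norm_sub_ofReal (z : ℂ) (c : ℝ) : z.im ≤ ‖z - c‖ := by
  simpa using (le_abs_self _).trans (Complex.abs_im_le_norm (z - c))

lemma hmUHP_sub_add (z : ℂ) (c r : ℝ) :
    hmUHP z (c - r) (c + r) =
      1 / π * (arctan ((r - (z.re - c)) / z.im) + arctan ((r + (z.re - c)) / z.im)) := by
  have h₂ : c + r - z.re = r - (z.re - c) := by ring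
  have h₁ : c - r - z.re = -(r + (z.re - c)) := by ring
  rw [hmUHP, h₂, h₁, neg_div, arctan_neg]
  ring

variable {z : ℂ} {c r : ℝ}

lemma hmUHP_eq_of_lt_norm (hz : 0 < z.im) (hr : 0 ≤ r) (h : r < ‖z - c‖) :
    hmUHP z (c - r) (c + r) = 1 / π * arctan (2 * r * z.im / (‖z - c‖ ^ 2 - r ^ 2)) := by
  have h' : r ^ 2 < (z.re - c) ^ 2 + z.im ^ 2 := by
    rw [← norm_sub_ofReal_sq]
    gcongr
  rw [hmUHP_sub_add, arctan_sub_div_add_arctan_add_div_of_lt hz h', norm_sub_ofReal_sq]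

lemma hmUHP_eq_half_of_norm_eq (hz : 0 < z.im) (h : ‖z - c‖ = r) :
    hmUHP z (c - r) (c + r) = 1 / 2 := by
  have h' : (z.re - c) ^ 2 + z.im ^ 2 = r ^ 2 := by rw [← norm_sub_ofReal_sq, h]
  rw [hmUHP_sub_add, arctan_sub_div_add_arctan_add_div_of_eq hz (h ▸ norm_nonneg _) h']
  field_simp [pi_ne_zero]

lemma hmUHP_eq_of_norm_lt (hz : 0 < z.im) (h : ‖z - c‖ < r) :
    hmUHP z (c - r) (c + r) = 1 - 1 / π * arctan (2 * r * z.im / (r ^ 2 - ‖z - c‖ ^ 2)) := by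
  have h' : (z.re - c) ^ 2 + z.im ^ 2 < r ^ 2 := by
    rw [← norm_sub_ofReal_sq]
    gcongr
  rw [hmUHP_sub_add, arctan_sub_div_add_arctan_add_div_of_gt hz ((norm_nonneg _).trans h.le) h',
    norm_sub_ofReal_sq]
  field_simp [pi_ne_zero]

lemma hmUHP_polar {t θ : ℝ} (ht : 0 < t) (htr : t < r) (hθ : 0 < θ) (hθπ : θ < π) :
    hmUHP (c + t * Complex.exp (θ * Complex.I)) (c - r) (c + r) =
      1 - 1 / π * arctan (2 * r * t * sin θ / (r ^ 2 - t ^ 2)) := by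
  have hnorm : ‖(c + t * Complex.exp (θ * Complex.I) : ℂ) - c‖ = t := by
    simp [Complex.norm_exp_ofReal_mul_I, ht.le]
  have him : (c + t * Complex.exp (θ * Complex.I) : ℂ).im = t * sin θ := by
    simp [Complex.exp_ofReal_mul_I_im]
  rw [hmUHP_eq_of_norm_lt (him ▸ mul_pos ht (sin_pos_of_pos_of_lt_pi hθ hθπ)) (by rwa [hnorm]),
    hnorm, him, mul_assoc (2 * r)]

end HalfDisk

theorem hmUHP_halfdisk_bounds_general
    (t₁ t₂ x₀ r : ℝ) (h12 : t₁ < t₂)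
    (hx₀ : x₀ = (t₁ + t₂) / 2) (hr : r = (t₂ - t₁) / 2)
    (z : ℂ) (hz : 0 < z.im) :
    (r < ‖z - (x₀ : ℂ)‖ →
      hmUHP z t₁ t₂
        ≤ (1 / Real.pi) * Real.arctan (2 * r * ‖z - (x₀ : ℂ)‖ /
            (‖z - (x₀ : ℂ)‖ ^ 2 - r ^ 2))) ∧
    (‖z - (x₀ : ℂ)‖ = r → hmUHP z t₁ t₂ = 1 / 2) ∧
    (0 < ‖z - (x₀ : ℂ)‖ → ‖z - (x₀ : ℂ)‖ < r →
      (1 - (1 / Real.pi) * Real.arctan (2 * r * ‖z - (x₀ : ℂ)‖ /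
          (r ^ 2 - ‖z - (x₀ : ℂ)‖ ^ 2)) ≤ hmUHP z t₁ t₂) ∧
      1 - (1 / Real.pi) * (2 * r * ‖z - (x₀ : ℂ)‖ /
          (r ^ 2 - ‖z - (x₀ : ℂ)‖ ^ 2))
        ≤ 1 - (1 / Real.pi) * Real.arctan (2 * r * ‖z - (x₀ : ℂ)‖ /
          (r ^ 2 - ‖z - (x₀ : ℂ)‖ ^ 2))) ∧
    (∀ t θ : ℝ, 0 < t → t < r → 0 < θ → θ < Real.pi →
      z - (x₀ : ℂ) = (t : ℂ) * Complex.exp ((θ : ℂ) * Complex.I) →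
      hmUHP z t₁ t₂
          = 1 - (1 / Real.pi) * Real.arctan (2 * r * t * Real.sin θ / (r ^ 2 - t ^ 2)) ∧
      ∀ θ' ∈ Set.Ioo (0 : ℝ) Real.pi,
        hmUHP ((x₀ : ℂ) + (t : ℂ) * Complex.I) t₁ t₂
          ≤ hmUHP ((x₀ : ℂ) + (t : ℂ) * Complex.exp ((θ' : ℂ) * Complex.I)) t₁ t₂) := by
  have hr0 : 0 < r := by linarith
  obtain rfl : t₁ = x₀ - r := by linarith
  obtain rfl : t₂ = x₀ + r := by linarith
  have him := im_le_norm_sub_ofReal z x₀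
  refine ⟨fun hgt => ?_, hmUHP_eq_half_of_norm_eq hz, fun _ hlt => ⟨?_, ?_⟩,
    fun t θ ht htr hθ hθπ hzθ => ⟨?_, fun θ' ⟨hθ'0, hθ'π⟩ => ?_⟩⟩
  · have : 0 < ‖z - x₀‖ ^ 2 - r ^ 2 := by nlinarith
    rw [hmUHP_eq_of_lt_norm hz hr0.le hgt]
    gcongr
  · have : 0 < r ^ 2 - ‖z - x₀‖ ^ 2 := by nlinarith [norm_nonneg (z - x₀)]
    rw [hmUHP_eq_of_norm_lt hz hlt]
    gcongr
  · have : 0 < r ^ 2 - ‖z - x₀‖ ^ 2 := by nlinarith [norm_nonneg (z - x₀)]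
    gcongr
    exact arctan_le_self_of_nonneg (by positivity)
  · rw [sub_eq_iff_eq_add'.mp hzθ]
    exact hmUHP_polar ht htr hθ hθπ
  · have hI : Complex.exp (((π / 2 : ℝ) : ℂ) * Complex.I) = Complex.I := by
      push_cast
      exact Complex.exp_pi_div_two_mul_I
    have htop := hmUHP_polar (c := x₀) ht htr (div_pos pi_pos two_pos) (by linarith [pi_pos])
    rw [hI, sin_pi_div_two] at htop
    have : 0 < r ^ 2 - t ^ 2 := by nlinarith
    have := sin_nonneg_of_nonneg_of_le_pi hθ'0.le hθ'π.le
    rw [htop, hmUHP_polar ht htr hθ'0 hθ'π]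
    gcongr
    exact sin_le_one θ'

/-- Proposition `pr:eshmb` (with Lemma `l:oups`): let `0 ≤ t₁ < t₂`, `x₀ = (t₁+t₂)/2`,
`r = (t₂-t₁)/2` and let `z` lie in the open upper half-plane. Then:
(1) if `|z-x₀| > r` then `ω(z,[t₁,t₂]) ≤ (1/π)·arctan(2r|z-x₀|/(|z-x₀|²-r²))`;
(2) if `|z-x₀| = r` then `ω(z,[t₁,t₂]) = 1/2`;
(3) if `0 < |z-x₀| < r` then
`ω(z,[t₁,t₂]) ≥ 1 - (1/π)·arctan(2r|z-x₀|/(r²-|z-x₀|²)) ≥ 1 - (1/π)·2r|z-x₀|/(r²-|z-x₀|²)`;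
(4) if moreover `z - x₀ = t·e^{iθ}` with `0 < t < r`, `0 < θ < π`, then
`ω(z,[t₁,t₂]) = 1 - (1/π)·arctan(2rt·sin θ/(r²-t²))`, and the minimum over `θ ∈ (0,π)`
at fixed `t` is attained at `θ = π/2`. -/
theorem hmUHP_halfdisk_bounds
    (t₁ t₂ x₀ r : ℝ) (h1 : 0 ≤ t₁) (h12 : t₁ < t₂)
    (hx₀ : x₀ = (t₁ + t₂) / 2) (hr : r = (t₂ - t₁) / 2)
    (z : ℂ) (hz : 0 < z.im) :
    (r < ‖z - (x₀ : ℂ)‖ →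
      hmUHP z t₁ t₂
        ≤ (1 / Real.pi) * Real.arctan (2 * r * ‖z - (x₀ : ℂ)‖ /
            (‖z - (x₀ : ℂ)‖ ^ 2 - r ^ 2))) ∧
    (‖z - (x₀ : ℂ)‖ = r → hmUHP z t₁ t₂ = 1 / 2) ∧
    (0 < ‖z - (x₀ : ℂ)‖ → ‖z - (x₀ : ℂ)‖ < r →
      (1 - (1 / Real.pi) * Real.arctan (2 * r * ‖z - (x₀ : ℂ)‖ /
          (r ^ 2 - ‖z - (x₀ : ℂ)‖ ^ 2)) ≤ hmUHP z t₁ t₂) ∧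
      1 - (1 / Real.pi) * (2 * r * ‖z - (x₀ : ℂ)‖ /
          (r ^ 2 - ‖z - (x₀ : ℂ)‖ ^ 2))
        ≤ 1 - (1 / Real.pi) * Real.arctan (2 * r * ‖z - (x₀ : ℂ)‖ /
          (r ^ 2 - ‖z - (x₀ : ℂ)‖ ^ 2))) ∧
    (∀ t θ : ℝ, 0 < t → t < r → 0 < θ → θ < Real.pi →
      z - (x₀ : ℂ) = (t : ℂ) * Complex.exp ((θ : ℂ) * Complex.I) →
      hmUHP z t₁ t₂
          = 1 - (1 / Real.pi) * Real.arctan (2 * r * t * Real.sin θ / (r ^ 2 - t ^ 2)) ∧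
      ∀ θ' ∈ Set.Ioo (0 : ℝ) Real.pi,
        hmUHP ((x₀ : ℂ) + (t : ℂ) * Complex.I) t₁ t₂
          ≤ hmUHP ((x₀ : ℂ) + (t : ℂ) * Complex.exp ((θ' : ℂ) * Complex.I)) t₁ t₂) :=
  hmUHP_halfdisk_bounds_general t₁ t₂ x₀ r h12 hx₀ hr z hz
end

section
/- Let μ be a positive Borel measure on ℂ that is finite on compact sets. Then the following three assertions are pairwise equivalent: (b1) the balayage μ^bal of μ out of the upper half-plane is finite on every bounded Borel subset of ℂ; (b2) there exists a bounded Borel set B ⊆ ℝ of positive Lebesgue measure such that ∫_{{Im z > 0}} ω(z,B) dμ(z) < ∞; (b3) μ satisfies the Blaschke condition near infinity in the upper half-plane, i.e. ∫_{{Im z > 0, |z| ≥ r₀}} (Im z)/|z|² dμ(z) < ∞ for some r₀ > 0. -/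
open MeasureTheory Filter Set
open scoped ENNReal

/-- The Poisson kernel of the upper half-plane at `z`, evaluated at `t ∈ ℝ`. -/
noncomputable def poisson (z : ℂ) (t : ℝ) : ℝ :=
  (1 / Real.pi) * z.im / ((t - z.re) ^ 2 + z.im ^ 2)

/-- The harmonic measure `ω(z,B)` of a Borel set `B ⊆ ℂ` at a point `z` of the upper
half-plane: the integral of the Poisson kernel over the real trace of `B`. -/
noncomputable def omegaUHP (z : ℂ) (B : Set ℂ) : ℝ :=
  ∫ t in {t : ℝ | (t : ℂ) ∈ B}, poisson z t

/-- The balayage of a positive measure `μ` on `ℂ` out of the upper half-plane, as a set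
function: `μ^bal(B) = ∫_{Im z>0} ω(z,B) dμ(z) + μ(B ∩ {Im z ≤ 0})`. -/
noncomputable def balUHP (μ : Measure ℂ) (B : Set ℂ) : ℝ≥0∞ :=
  (∫⁻ z in {z : ℂ | 0 < z.im}, ENNReal.ofReal (omegaUHP z B) ∂μ)
    + μ (B ∩ {z : ℂ | z.im ≤ 0})

/-!
For real `t` with `2|t| ≤ |z|` the distance `|z - t|` lies between `|z|/2` and `2|z|`, so far
from a bounded set `B ⊆ ℝ` the Poisson kernel on `B` is comparable to `Im z / |z|²`, and
`ω(z, B) ≍ |B| · Im z / |z|²` for large `|z|`. Near the origin `ω ≤ 1` and `μ` is finite on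
compact sets, so the finiteness of either integral of `ω` is decided at infinity, where it is the
Blaschke condition.
-/

open Real ProbabilityTheory Metric

section HarmonicMeasure

variable {z : ℂ}

lemma poisson_eq_cauchyPDFReal (hz : 0 ≤ z.im) :
    poisson z = cauchyPDFReal z.re z.im.toNNReal := by
  ext t
  simp only [poisson, cauchyPDFReal, Real.coe_toNNReal _ hz]
  ring

lemma integrable_poisson (hz : 0 ≤ z.im) : Integrable (poisson z) := by
  rw [poisson_eq_cauchyPDFReal hz]
  exact integrable_cauchyPDFReal _

lemma integral_poisson (hz : 0 < z.im) : ∫ t, poisson z t = 1 := by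
  rw [poisson_eq_cauchyPDFReal hz.le]
  exact integral_cauchyPDFReal_eq_one _ (Real.toNNReal_pos.mpr hz).ne'

lemma poisson_eq_div_norm_sq (z : ℂ) (t : ℝ) : poisson z t = z.im / (π * ‖z - t‖ ^ 2) := by
  rw [poisson, mul_comm π, ← div_div, Complex.sq_norm, Complex.normSq_apply]
  simp only [Complex.sub_re, Complex.sub_im, Complex.ofReal_re, Complex.ofReal_im, sub_zero]
  ring

lemma poisson_nonneg (hz : 0 ≤ z.im) (t : ℝ) : 0 ≤ poisson z t := by
  rw [poisson_eq_div_norm_sq]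
  positivity

lemma poisson_le (hz : 0 < z.im) {t : ℝ} (ht : 2 * |t| ≤ ‖z‖) :
    poisson z t ≤ 4 / π * (z.im / ‖z‖ ^ 2) := by
  have hz0 : 0 < ‖z‖ := norm_pos_iff.mpr fun h => by simp [h] at hz
  have hdist : ‖z‖ / 2 ≤ ‖z - t‖ := by
    have := norm_sub_norm_le z (t : ℂ)
    rw [Complex.norm_real, Real.norm_eq_abs] at this
    linarith
  calc poisson z t = z.im / (π * ‖z - t‖ ^ 2) := poisson_eq_div_norm_sq z t
    _ ≤ z.im / (π * (‖z‖ / 2) ^ 2) := by gcongr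
    _ = 4 / π * (z.im / ‖z‖ ^ 2) := by field_simp; ring

lemma le_poisson (hz : 0 < z.im) {t : ℝ} (ht : |t| ≤ ‖z‖) :
    1 / (4 * π) * (z.im / ‖z‖ ^ 2) ≤ poisson z t := by
  have hne : 0 < ‖z - t‖ := norm_pos_iff.mpr fun h => by
    simpa [hz.ne'] using congrArg Complex.im h
  have hdist : ‖z - t‖ ≤ 2 * ‖z‖ := by
    have := norm_sub_le z (t : ℂ)
    rw [Complex.norm_real, Real.norm_eq_abs] at this
    linarith
  calc 1 / (4 * π) * (z.im / ‖z‖ ^ 2) = z.im / (π * (2 * ‖z‖) ^ 2) := by ring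
    _ ≤ z.im / (π * ‖z - t‖ ^ 2) := by gcongr
    _ = poisson z t := (poisson_eq_div_norm_sq z t).symm

lemma omegaUHP_le_one (hz : 0 < z.im) (B : Set ℂ) : omegaUHP z B ≤ 1 :=
  (setIntegral_le_integral (integrable_poisson hz.le)
    (Eventually.of_forall (poisson_nonneg hz.le))).trans_eq (integral_poisson hz)

lemma omegaUHP_le (hz : 0 < z.im) {B : Set ℂ} {R : ℝ} (hR : 0 ≤ R) (hB : B ⊆ closedBall 0 R)
    (hRz : 2 * R ≤ ‖z‖) : omegaUHP z B ≤ 8 * R / π * (z.im / ‖z‖ ^ 2) := by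
  set T := {t : ℝ | (t : ℂ) ∈ B}
  have hT : T ⊆ closedBall 0 R := fun t ht => by
    simpa only [mem_closedBall, dist_zero_right, Complex.norm_real] using hB ht
  have hpoisson : ∀ t ∈ T, ‖poisson z t‖ ≤ 4 / π * (z.im / ‖z‖ ^ 2) := fun t ht => by
    rw [Real.norm_of_nonneg (poisson_nonneg hz.le t)]
    have := mem_closedBall_zero_iff.mp (hT ht)
    exact poisson_le hz (by rw [Real.norm_eq_abs] at this; linarith)
  calc omegaUHP z B ≤ ‖omegaUHP z B‖ := Real.le_norm_self _
    _ ≤ 4 / π * (z.im / ‖z‖ ^ 2) * volume.real T :=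
      norm_setIntegral_le_of_norm_le_const
        ((measure_mono hT).trans_lt measure_closedBall_lt_top) hpoisson
    _ ≤ 4 / π * (z.im / ‖z‖ ^ 2) * (2 * R) := by
      gcongr
      exact (measureReal_mono hT measure_closedBall_lt_top.ne).trans_eq
        (Real.volume_real_closedBall hR)
    _ = 8 * R / π * (z.im / ‖z‖ ^ 2) := by ring

lemma omegaUHP_image_ofReal (z : ℂ) (B : Set ℝ) :
    omegaUHP z (Complex.ofReal '' B) = ∫ t in B, poisson z t := by
  simp only [omegaUHP, Complex.ofReal_injective.mem_set_image, ofPred_mem_eq]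

lemma le_omegaUHP_image_ofReal (hz : 0 < z.im) {B : Set ℝ} (hBm : MeasurableSet B) {R : ℝ}
    (hB : B ⊆ closedBall 0 R) (hRz : R ≤ ‖z‖) :
    volume.real B / (4 * π) * (z.im / ‖z‖ ^ 2) ≤ omegaUHP z (Complex.ofReal '' B) := by
  rw [omegaUHP_image_ofReal]
  calc volume.real B / (4 * π) * (z.im / ‖z‖ ^ 2)
      = 1 / (4 * π) * (z.im / ‖z‖ ^ 2) * volume.real B := by ring
    _ ≤ ∫ t in B, poisson z t :=
      setIntegral_ge_of_const_le_real hBm ((measure_mono hB).trans_lt measure_closedBall_lt_top).ne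
        (fun t ht => le_poisson hz ((mem_closedBall_zero_iff.mp (hB ht)).trans hRz))
        (integrable_poisson hz.le).integrableOn

end HarmonicMeasure

lemma setLIntegral_ofReal_lt_top_of_le_mul {α : Type*} [MeasurableSpace α] {μ : Measure α}
    {s : Set α} {f g : α → ℝ} {C : ℝ} (hs : MeasurableSet s) (hC : 0 ≤ C)
    (hfg : ∀ x ∈ s, f x ≤ C * g x) (hg : ∫⁻ x in s, ENNReal.ofReal (g x) ∂μ < ⊤) :
    ∫⁻ x in s, ENNReal.ofReal (f x) ∂μ < ⊤ :=
  calc ∫⁻ x in s, ENNReal.ofReal (f x) ∂μ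
      ≤ ∫⁻ x in s, ENNReal.ofReal C * ENNReal.ofReal (g x) ∂μ :=
        setLIntegral_mono' hs fun x hx =>
          (ENNReal.ofReal_le_ofReal (hfg x hx)).trans_eq (ENNReal.ofReal_mul hC)
    _ = ENNReal.ofReal C * ∫⁻ x in s, ENNReal.ofReal (g x) ∂μ :=
        lintegral_const_mul' _ _ ENNReal.ofReal_ne_top
    _ < ⊤ := ENNReal.mul_lt_top ENNReal.ofReal_lt_top hg

lemma measurableSet_upperHalfPlane : MeasurableSet {z : ℂ | 0 < z.im} :=
  measurableSet_lt measurable_const Complex.measurable_im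

lemma measurableSet_upperHalfPlane_norm_ge (r : ℝ) :
    MeasurableSet {z : ℂ | 0 < z.im ∧ r ≤ ‖z‖} :=
  measurableSet_upperHalfPlane.inter (measurableSet_le measurable_const measurable_norm)

section Balayage

variable {μ : Measure ℂ}

lemma lintegral_omegaUHP_lt_top [IsFiniteMeasureOnCompacts μ] {r₀ : ℝ}
    (hμ : ∫⁻ z in {z : ℂ | 0 < z.im ∧ r₀ ≤ ‖z‖}, ENNReal.ofReal (z.im / ‖z‖ ^ 2) ∂μ < ⊤)
    {B : Set ℂ} (hB : Bornology.IsBounded B) :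
    ∫⁻ z in {z : ℂ | 0 < z.im}, ENNReal.ofReal (omegaUHP z B) ∂μ < ⊤ := by
  obtain ⟨R, hR, hBR⟩ := hB.subset_closedBall_lt 0 0
  set M := max (2 * R) r₀
  set near := {z : ℂ | 0 < z.im} ∩ closedBall 0 M
  set far := {z : ℂ | 0 < z.im ∧ M ≤ ‖z‖}
  have hsplit : {z : ℂ | 0 < z.im} ⊆ near ∪ far := fun z hz => by
    rcases le_total ‖z‖ M with h | h
    · exact Or.inl ⟨hz, mem_closedBall_zero_iff.mpr h⟩
    · exact Or.inr ⟨hz, h⟩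
  have hnear : ∫⁻ z in near, ENNReal.ofReal (omegaUHP z B) ∂μ < ⊤ :=
    calc ∫⁻ z in near, ENNReal.ofReal (omegaUHP z B) ∂μ ≤ ∫⁻ _ in near, 1 ∂μ :=
          setLIntegral_mono' (measurableSet_upperHalfPlane.inter measurableSet_closedBall)
            fun z hz => ENNReal.ofReal_le_one.mpr (omegaUHP_le_one hz.1 B)
      _ = μ near := setLIntegral_one near
      _ < ⊤ := (measure_mono inter_subset_right).trans_lt measure_closedBall_lt_top
  have hfar : ∫⁻ z in far, ENNReal.ofReal (omegaUHP z B) ∂μ < ⊤ :=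
    setLIntegral_ofReal_lt_top_of_le_mul (measurableSet_upperHalfPlane_norm_ge M)
      (by positivity : 0 ≤ 8 * R / π)
      (fun z hz => omegaUHP_le hz.1 hR.le hBR ((le_max_left _ _).trans hz.2))
      ((lintegral_mono_set (t := {z : ℂ | 0 < z.im ∧ r₀ ≤ ‖z‖})
        fun z hz => ⟨hz.1, (le_max_right _ _).trans hz.2⟩).trans_lt hμ)
  exact (lintegral_mono_set hsplit).trans_lt
    ((lintegral_union_le _ _ _).trans_lt (ENNReal.add_lt_top.mpr ⟨hnear, hfar⟩))

lemma balUHP_lt_top_of_blaschke [IsFiniteMeasureOnCompacts μ] {r₀ : ℝ}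
    (hμ : ∫⁻ z in {z : ℂ | 0 < z.im ∧ r₀ ≤ ‖z‖}, ENNReal.ofReal (z.im / ‖z‖ ^ 2) ∂μ < ⊤)
    {B : Set ℂ} (hB : Bornology.IsBounded B) : balUHP μ B < ⊤ :=
  ENNReal.add_lt_top.mpr ⟨lintegral_omegaUHP_lt_top hμ hB,
    (measure_mono inter_subset_left).trans_lt hB.measure_lt_top⟩

lemma exists_lintegral_omegaUHP_lt_top
    (h : ∀ B : Set ℂ, MeasurableSet B → Bornology.IsBounded B → balUHP μ B < ⊤) :
    ∃ B : Set ℝ, MeasurableSet B ∧ Bornology.IsBounded B ∧ 0 < volume B ∧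
      ∫⁻ z in {z : ℂ | 0 < z.im}, ENNReal.ofReal (omegaUHP z (Complex.ofReal '' B)) ∂μ < ⊤ := by
  have hK : IsCompact (Complex.ofReal '' Icc 0 1) := isCompact_Icc.image Complex.continuous_ofReal
  exact ⟨Icc 0 1, measurableSet_Icc, isBounded_Icc 0 1, by simp,
    le_self_add.trans_lt (h _ hK.isClosed.measurableSet hK.isBounded)⟩

lemma blaschke_of_exists_lintegral_omegaUHP_lt_top
    (h : ∃ B : Set ℝ, MeasurableSet B ∧ Bornology.IsBounded B ∧ 0 < volume B ∧
      ∫⁻ z in {z : ℂ | 0 < z.im}, ENNReal.ofReal (omegaUHP z (Complex.ofReal '' B)) ∂μ < ⊤) :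
    ∃ r₀ > (0 : ℝ),
      ∫⁻ z in {z : ℂ | 0 < z.im ∧ r₀ ≤ ‖z‖}, ENNReal.ofReal (z.im / ‖z‖ ^ 2) ∂μ < ⊤ := by
  obtain ⟨B, hBm, hBb, hB0, hω⟩ := h
  obtain ⟨R, hR, hBR⟩ := hBb.subset_closedBall_lt 0 0
  have hvol : 0 < volume.real B := ENNReal.toReal_pos hB0.ne' hBb.measure_lt_top.ne
  refine ⟨R, hR, setLIntegral_ofReal_lt_top_of_le_mul (measurableSet_upperHalfPlane_norm_ge R)
    (C := (volume.real B / (4 * π))⁻¹) (by positivity) (fun z hz => ?_)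
    ((lintegral_mono_set fun z hz => hz.1).trans_lt hω)⟩
  exact (le_inv_mul_iff₀ (by positivity)).mpr (le_omegaUHP_image_ofReal hz.1 hBm hBR hz.2)

end Balayage

/-- Corollary `th:b0+`: for a positive measure `μ` on `ℂ`, finite on compact sets, the
following are pairwise equivalent: (b1) the balayage `μ^bal` out of the upper half-plane
is finite on every bounded Borel set; (b2) `∫_{Im z>0} ω(z,B) dμ(z) < ∞` for some bounded
Borel set `B ⊆ ℝ` of positive Lebesgue measure; (b3) `μ` satisfies the Blaschke condition
near infinity in the upper half-plane. -/
theorem balUHP_finite_iff_blaschke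
    (μ : Measure ℂ) [IsFiniteMeasureOnCompacts μ] :
    ((∀ B : Set ℂ, MeasurableSet B → Bornology.IsBounded B → balUHP μ B < ⊤) ↔
      (∃ B : Set ℝ, MeasurableSet B ∧ Bornology.IsBounded B ∧ 0 < volume B ∧
        (∫⁻ z in {z : ℂ | 0 < z.im},
          ENNReal.ofReal (omegaUHP z ((fun t : ℝ => (t : ℂ)) '' B)) ∂μ) < ⊤)) ∧
    ((∃ B : Set ℝ, MeasurableSet B ∧ Bornology.IsBounded B ∧ 0 < volume B ∧
        (∫⁻ z in {z : ℂ | 0 < z.im},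
          ENNReal.ofReal (omegaUHP z ((fun t : ℝ => (t : ℂ)) '' B)) ∂μ) < ⊤) ↔
      (∃ r₀ > (0 : ℝ),
        (∫⁻ z in {z : ℂ | 0 < z.im ∧ r₀ ≤ ‖z‖},
          ENNReal.ofReal (z.im / ‖z‖ ^ 2) ∂μ) < ⊤)) := by
  constructor
  · refine ⟨exists_lintegral_omegaUHP_lt_top, fun h B _ hB => ?_⟩
    obtain ⟨r₀, -, hμ⟩ := blaschke_of_exists_lintegral_omegaUHP_lt_top h
    exact balUHP_lt_top_of_blaschke hμ hB
  · exact ⟨blaschke_of_exists_lintegral_omegaUHP_lt_top, fun ⟨r₀, _, hμ⟩ =>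
      exists_lintegral_omegaUHP_lt_top fun B _ hB => balUHP_lt_top_of_blaschke hμ hB⟩
end

section
/- Let q be a natural number (q ≥ 0) and z a complex number. Define, for t > 0, the truncated Weierstrass–Hadamard kernel of genus q by K_q(z,t) := log|t − z| − log t + Σ_{j=1}^{q} (1/j)·Re((z/t)^j). Then for every t > 0 with (t : ℂ) ≠ z, the function t ↦ K_q(z,t) is differentiable at t with derivative d/dt K_q(z,t) = Re( z^{q+1} / (t^{q+1}·(t − z)) ). -/
/-! For `t > 0` one has `K_q(z,t) = log |E_q(z/t)|`, where
`E_q(w) = (1 - w) exp (∑_{k=1}^q w^k / k)` is Weierstrass' elementary factor. Along any path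
`w(s)`, the derivative of `log |E_q(w)|` is `Re (w' · E_q'(w) / E_q(w))`, and
`E_q'(w) / E_q(w) = -1/(1 - w) + ∑_{k<q} w^k = -w^q / (1 - w)` by the geometric sum.
Taking `w(s) = z/s`, with `w' = -z/t²`, gives the formula. -/

open Real

/-- The truncated Weierstrass–Hadamard kernel of genus `q` evaluated at a point `t` of the
positive real axis: `K_q(z,t) = log|t - z| - log t + Σ_{j=1}^{q} (1/j)·Re((z/t)^j)`. -/
noncomputable def WHkernel (q : ℕ) (z : ℂ) (t : ℝ) : ℝ :=
  Real.log ‖(t : ℂ) - z‖ - Real.log t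
    + ∑ j ∈ Finset.range q, (1 / (j + 1 : ℝ)) * ((z / (t : ℂ)) ^ (j + 1)).re

open Finset

/-- `log |E_q w|` for the Weierstrass elementary factor `E_q w = (1 - w) exp (∑_{k=1}^q w^k / k)`. -/
noncomputable def logNormElementaryFactor (q : ℕ) (w : ℂ) : ℝ :=
  Real.log ‖1 - w‖ + (∑ j ∈ range q, w ^ (j + 1) / (j + 1)).re

section
variable {f : ℝ → ℂ} {f' : ℂ} {t : ℝ}

theorem HasDerivAt.re (hf : HasDerivAt f f' t) : HasDerivAt (fun s => (f s).re) f'.re t :=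
  Complex.reCLM.hasFDerivAt.comp_hasDerivAt t hf

theorem HasDerivAt.log_norm (hf : HasDerivAt f f' t) (hft : f t ≠ 0) :
    HasDerivAt (fun s => Real.log ‖f s‖) (f' / f t).re t := by
  have hsq := (hf.norm_sq.log (by positivity)).div_const 2
  refine (hsq.congr_of_eventuallyEq (Filter.Eventually.of_forall fun s => ?_)).congr_deriv ?_
  · simp only [Real.log_pow]; ring
  · rw [Complex.inner, Complex.div_re, Complex.normSq_eq_norm_sq]
    simp only [Complex.mul_re, Complex.conj_re, Complex.conj_im, mul_neg, sub_neg_eq_add]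
    ring

theorem HasDerivAt.logNormElementaryFactor (q : ℕ) (hf : HasDerivAt f f' t) (hft : f t ≠ 1) :
    HasDerivAt (fun s => logNormElementaryFactor q (f s))
      (-(f t ^ q / (1 - f t) * f')).re t := by
  have hlog := (hf.const_sub 1).log_norm (sub_ne_zero.2 hft.symm)
  have hsum : HasDerivAt (fun s => ∑ j ∈ range q, f s ^ (j + 1) / (j + 1))
      ((∑ j ∈ range q, f t ^ j) * f') t := by
    rw [sum_mul]
    refine HasDerivAt.fun_sum fun j _ => ?_
    refine ((hf.fun_pow (j + 1)).div_const ((j : ℂ) + 1)).congr_deriv ?_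
    field_simp
    push_cast
    ring
  refine (hlog.add hsum.re).congr_deriv ?_
  have : f t - 1 ≠ 0 := sub_ne_zero.2 hft
  have : 1 - f t ≠ 0 := sub_ne_zero.2 hft.symm
  rw [← Complex.add_re, geom_sum_eq hft]
  congr 1
  field_simp
  ring

end

theorem WHkernel_eq_logNormElementaryFactor {q : ℕ} {z : ℂ} {s : ℝ} (hs : 0 < s)
    (hsz : (s : ℂ) ≠ z) : WHkernel q z s = logNormElementaryFactor q (z / s) := by
  have hs' : (s : ℂ) ≠ 0 := by exact_mod_cast hs.ne'
  have hnorm : ‖(s : ℂ) - z‖ = s * ‖1 - z / s‖ := by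
    rw [show (s : ℂ) - z = s * (1 - z / s) by field_simp, norm_mul, Complex.norm_of_nonneg hs.le]
  have hnorm_ne : ‖1 - z / s‖ ≠ 0 := by
    rw [norm_ne_zero_iff, sub_ne_zero, Ne, eq_div_iff hs', one_mul]
    exact hsz
  rw [WHkernel, logNormElementaryFactor, Complex.re_sum, hnorm, Real.log_mul hs.ne' hnorm_ne,
    add_sub_cancel_left]
  congr 1
  refine sum_congr rfl fun j _ => ?_
  rw [show ((j : ℂ) + 1) = ((j + 1 : ℝ) : ℂ) by push_cast; rfl, Complex.div_ofReal_re]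
  ring

/-- Proposition `pr:nR+`, formula for the derivative of the Weierstrass–Hadamard kernel:
for `t > 0` with `(t : ℂ) ≠ z` one has
`d/dt K_q(z,t) = Re( z^{q+1} / (t^{q+1}·(t - z)) )`. -/
theorem hasDerivAt_WHkernel
    (q : ℕ) (z : ℂ) (t : ℝ) (ht : 0 < t) (htz : (t : ℂ) ≠ z) :
    HasDerivAt (fun s : ℝ => WHkernel q z s)
      ((z ^ (q + 1) / ((t : ℂ) ^ (q + 1) * ((t : ℂ) - z))).re) t := by
  have ht' : (t : ℂ) ≠ 0 := by exact_mod_cast ht.ne'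
  have hw : HasDerivAt (fun s : ℝ => z / (s : ℂ)) (-z / (t : ℂ) ^ 2) t := by
    simpa [div_eq_mul_inv] using ((hasDerivAt_inv ht').const_mul z).comp_ofReal
  have hw1 : z / t ≠ 1 := by
    rw [Ne, div_eq_one_iff_eq ht']
    exact htz.symm
  refine ((hw.logNormElementaryFactor q hw1).congr_of_eventuallyEq ?_).congr_deriv ?_
  · filter_upwards [lt_mem_nhds ht, Complex.continuous_ofReal.continuousAt.eventually_ne htz]
      with s hs hsz using WHkernel_eq_logNormElementaryFactor hs hsz
  · have : (t : ℂ) - z ≠ 0 := sub_ne_zero.2 htz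
    rw [div_pow]
    congr 1
    field_simp
    ring
end
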